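/- arXiv:1305.5669 — 13 statements merged into one kernel-verified Lean document; each statement's English description precedes it below -/
import Mathlib

section
/- Let α > 0 and let A, B, C, D, E : ℝ → ℝ be continuous on [-α, α] with A, C, D, E even functions and B an odd function. Let K : ℝ → ℝ be even and differentiable on [-α, α] with (A·K)'(x) = B(x)·K(x) for all x ∈ [-α, α] and A(α)·K(α) = 0. Let n, m be natural numbers, λₙ, λₘ real constants, and let Φₙ, Φₘ : ℝ → ℝ be twice continuously differentiable on [-α, α] with Φₙ(-x) = (-1)ⁿ Φₙ(x) and Φₘ(-x) = (-1)ᵐ Φₘ(x) for all x, satisfying A(x)Φₙ''(x) + B(x)Φₙ'(x) + (λₙ C(x) + D(x) + (1-(-1)ⁿ)E(x)/2)Φₙ(x) = 0 and A(x)Φₘ''(x) + B(x)Φₘ'(x) + (λₘ C(x) + D(x) + (1-(-1)ᵐ)E(x)/2)Φₘ(x) = 0 on [-α, α]. If n and m have different parities, or if λₙ ≠ λₘ, then ∫_{-α}^{α} C(x)K(x)Φₙ(x)Φₘ(x) dx = 0. -/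
/-!
If `n` and `m` have different parities, the integrand `C K Φₙ Φₘ` is odd, since `C K` is even,
so its integral over `[-α, α]` vanishes. If they have the same parity, both equations share the
potential `D + (1 - (-1)ⁿ) E / 2`; because `(A K)' = B K`, multiplying them by `K` puts them in
self-adjoint form `((A K) Φ')' + (λ C K + …) Φ = 0`, and Green's identity gives
`(λₘ - λₙ) ∫ C K Φₙ Φₘ = [A K (Φₙ' Φₘ - Φₙ Φₘ')]_{-α}^{α}`, which vanishes because `A K` vanishes
at `α` and, by evenness, at `-α`.
-/

open intervalIntegral Set

theorem Function.Odd.intervalIntegral_neg_eq_zero {E : Type*} [NormedAddCommGroup E]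
    [NormedSpace ℝ E] {f : ℝ → E} (hf : f.Odd) (a : ℝ) : ∫ x in (-a)..a, f x = 0 := by
  have h := integral_comp_neg (a := -a) (b := a) f
  simp only [hf.eq, integral_neg, neg_neg] at h
  have : IsAddTorsionFree E := .of_isTorsionFree ℝ E
  exact neg_eq_self.mp h

theorem neg_one_pow_mul_neg_one_pow_of_mod_two_ne {R : Type*} [Monoid R] [HasDistribNeg R]
    {n m : ℕ} (h : n % 2 ≠ m % 2) : (-1 : R) ^ n * (-1) ^ m = -1 := by
  rw [← pow_add]
  exact (Nat.odd_iff.mpr (by omega)).neg_one_pow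

theorem HasDerivAt.mul_wronskian {p u u' v v' : ℝ → ℝ} {x dp du' dv' : ℝ}
    (hp : HasDerivAt p dp x) (hu : HasDerivAt u (u' x) x) (hu' : HasDerivAt u' du' x)
    (hv : HasDerivAt v (v' x) x) (hv' : HasDerivAt v' dv' x) :
    HasDerivAt (fun y => p y * (u' y * v y - u y * v' y))
      (dp * (u' x * v x - u x * v' x) + p x * (du' * v x - u x * dv')) x := by
  refine (hp.fun_mul ((hu'.fun_mul hv).fun_sub (hu.fun_mul hv'))).congr_deriv ?_
  ring

section SturmLiouville

variable {a b lu lv : ℝ} {A B C Q K u u' u'' v v' v'' : ℝ → ℝ}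
  (hab : a ≤ b) (hC : ContinuousOn C (Icc a b)) (hK : ContinuousOn K (Icc a b))
  (hAK : ∀ x ∈ Icc a b, HasDerivAt (fun y => A y * K y) (B x * K x) x)
  (hu : ∀ x ∈ Icc a b, HasDerivAt u (u' x) x) (hu' : ∀ x ∈ Icc a b, HasDerivAt u' (u'' x) x)
  (hv : ∀ x ∈ Icc a b, HasDerivAt v (v' x) x) (hv' : ∀ x ∈ Icc a b, HasDerivAt v' (v'' x) x)
  (hodeu : ∀ x ∈ Icc a b, A x * u'' x + B x * u' x + (lu * C x + Q x) * u x = 0)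
  (hodev : ∀ x ∈ Icc a b, A x * v'' x + B x * v' x + (lv * C x + Q x) * v x = 0)
include hab hC hK hAK hu hu' hv hv' hodeu hodev

theorem sub_mul_integral_weight_mul_eq_wronskian_sub :
    (lv - lu) * ∫ x in a..b, C x * K x * u x * v x =
      A b * K b * (u' b * v b - u b * v' b) - A a * K a * (u' a * v a - u a * v' a) := by
  have hcont {w w' : ℝ → ℝ} (hw : ∀ x ∈ Icc a b, HasDerivAt w (w' x) x) :
      ContinuousOn w (Icc a b) := fun x hx => (hw x hx).continuousAt.continuousWithinAt
  have hderiv : ∀ x ∈ uIcc a b, HasDerivAt (fun y => A y * K y * (u' y * v y - u y * v' y))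
      ((lv - lu) * (C x * K x * u x * v x)) x := by
    intro x hx
    rw [uIcc_of_le hab] at hx
    refine ((hAK x hx).mul_wronskian (hu x hx) (hu' x hx) (hv x hx) (hv' x hx)).congr_deriv ?_
    linear_combination (K x * v x) * hodeu x hx - (K x * u x) * hodev x hx
  rw [← integral_const_mul]
  refine integral_eq_sub_of_hasDerivAt hderiv (ContinuousOn.intervalIntegrable ?_)
  rw [uIcc_of_le hab]
  exact continuousOn_const.mul (((hC.mul hK).mul (hcont hu)).mul (hcont hv))

theorem integral_weight_mul_eq_zero_of_eigenvalue_ne (ha : A a * K a = 0) (hb : A b * K b = 0)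
    (hne : lu ≠ lv) : ∫ x in a..b, C x * K x * u x * v x = 0 := by
  have h := sub_mul_integral_weight_mul_eq_wronskian_sub hab hC hK hAK hu hu' hv hv' hodeu hodev
  rw [ha, hb, zero_mul, zero_mul, sub_zero] at h
  exact (mul_eq_zero.mp h).resolve_left (sub_ne_zero.mpr hne.symm)

end SturmLiouville

theorem extended_sturm_liouville_symmetric_general
    (α : ℝ) (hα : 0 < α)
    (A B C D E K : ℝ → ℝ)
    (hCc : ContinuousOn C (Set.Icc (-α) α))
    (hAeven : ∀ x, A (-x) = A x)
    (hCeven : ∀ x, C (-x) = C x)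
    (hKeven : ∀ x, K (-x) = K x)
    (hKdiff : DifferentiableOn ℝ K (Set.Icc (-α) α))
    (hselfadj : ∀ x ∈ Set.Icc (-α) α, HasDerivAt (fun y => A y * K y) (B x * K x) x)
    (hbc : A α * K α = 0)
    (n m : ℕ) (lamn lamm : ℝ)
    (Φn Φn' Φn'' Φm Φm' Φm'' : ℝ → ℝ)
    (hΦn1 : ∀ x ∈ Set.Icc (-α) α, HasDerivAt Φn (Φn' x) x)
    (hΦn2 : ∀ x ∈ Set.Icc (-α) α, HasDerivAt Φn' (Φn'' x) x)
    (hΦm1 : ∀ x ∈ Set.Icc (-α) α, HasDerivAt Φm (Φm' x) x)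
    (hΦm2 : ∀ x ∈ Set.Icc (-α) α, HasDerivAt Φm' (Φm'' x) x)
    (hsymn : ∀ x, Φn (-x) = (-1 : ℝ) ^ n * Φn x)
    (hsymm : ∀ x, Φm (-x) = (-1 : ℝ) ^ m * Φm x)
    (hoden : ∀ x ∈ Set.Icc (-α) α,
      A x * Φn'' x + B x * Φn' x
        + (lamn * C x + D x + (1 - (-1 : ℝ) ^ n) * E x / 2) * Φn x = 0)
    (hodem : ∀ x ∈ Set.Icc (-α) α,
      A x * Φm'' x + B x * Φm' x
        + (lamm * C x + D x + (1 - (-1 : ℝ) ^ m) * E x / 2) * Φm x = 0)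
    (hsep : n % 2 ≠ m % 2 ∨ lamn ≠ lamm) :
    ∫ x in (-α)..α, C x * K x * Φn x * Φm x = 0 := by
  rcases eq_or_ne (n % 2) (m % 2) with hpar | hpar
  · have hpow : (-1 : ℝ) ^ m = (-1) ^ n := by
      rw [neg_one_pow_eq_pow_mod_two, ← hpar, ← neg_one_pow_eq_pow_mod_two]
    have hbc_neg : A (-α) * K (-α) = 0 := by rw [hAeven, hKeven, hbc]
    exact integral_weight_mul_eq_zero_of_eigenvalue_ne
      (Q := fun x => D x + (1 - (-1) ^ n) * E x / 2) (by linarith)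
      hCc hKdiff.continuousOn hselfadj hΦn1 hΦn2 hΦm1 hΦm2
      (fun x hx => by linear_combination hoden x hx)
      (fun x hx => by linear_combination hodem x hx + E x * Φm x / 2 * hpow)
      hbc_neg hbc (hsep.resolve_left (not_not.mpr hpar))
  · have hodd : Function.Odd (C * K * Φn * Φm) := fun x => by
      simp only [Pi.mul_apply, hCeven, hKeven, hsymn, hsymm]
      linear_combination
        C x * K x * Φn x * Φm x * neg_one_pow_mul_neg_one_pow_of_mod_two_ne (R := ℝ) hpar
    exact hodd.intervalIntegral_neg_eq_zero α

/-- Extended Sturm–Liouville theorem for symmetric functions: eigenfunctions of the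
symmetric equation corresponding to different parities or different eigenvalues are
orthogonal with respect to the weight `W*(x) = C(x)·K(x)` on `[-α, α]`. -/
theorem extended_sturm_liouville_symmetric
    (α : ℝ) (hα : 0 < α)
    (A B C D E K : ℝ → ℝ)
    (hAc : ContinuousOn A (Set.Icc (-α) α))
    (hBc : ContinuousOn B (Set.Icc (-α) α))
    (hCc : ContinuousOn C (Set.Icc (-α) α))
    (hDc : ContinuousOn D (Set.Icc (-α) α))
    (hEc : ContinuousOn E (Set.Icc (-α) α))
    (hAeven : ∀ x, A (-x) = A x)
    (hBodd : ∀ x, B (-x) = -B x)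
    (hCeven : ∀ x, C (-x) = C x)
    (hDeven : ∀ x, D (-x) = D x)
    (hEeven : ∀ x, E (-x) = E x)
    (hKeven : ∀ x, K (-x) = K x)
    (hKdiff : DifferentiableOn ℝ K (Set.Icc (-α) α))
    (hselfadj : ∀ x ∈ Set.Icc (-α) α, HasDerivAt (fun y => A y * K y) (B x * K x) x)
    (hbc : A α * K α = 0)
    (n m : ℕ) (lamn lamm : ℝ)
    (Φn Φn' Φn'' Φm Φm' Φm'' : ℝ → ℝ)
    (hΦn1 : ∀ x ∈ Set.Icc (-α) α, HasDerivAt Φn (Φn' x) x)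
    (hΦn2 : ∀ x ∈ Set.Icc (-α) α, HasDerivAt Φn' (Φn'' x) x)
    (hΦn2c : ContinuousOn Φn'' (Set.Icc (-α) α))
    (hΦm1 : ∀ x ∈ Set.Icc (-α) α, HasDerivAt Φm (Φm' x) x)
    (hΦm2 : ∀ x ∈ Set.Icc (-α) α, HasDerivAt Φm' (Φm'' x) x)
    (hΦm2c : ContinuousOn Φm'' (Set.Icc (-α) α))
    (hsymn : ∀ x, Φn (-x) = (-1 : ℝ) ^ n * Φn x)
    (hsymm : ∀ x, Φm (-x) = (-1 : ℝ) ^ m * Φm x)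
    (hoden : ∀ x ∈ Set.Icc (-α) α,
      A x * Φn'' x + B x * Φn' x
        + (lamn * C x + D x + (1 - (-1 : ℝ) ^ n) * E x / 2) * Φn x = 0)
    (hodem : ∀ x ∈ Set.Icc (-α) α,
      A x * Φm'' x + B x * Φm' x
        + (lamm * C x + D x + (1 - (-1 : ℝ) ^ m) * E x / 2) * Φm x = 0)
    (hsep : n % 2 ≠ m % 2 ∨ lamn ≠ lamm) :
    ∫ x in (-α)..α, C x * K x * Φn x * Φm x = 0 :=
  extended_sturm_liouville_symmetric_general α hα A B C D E K hCc hAeven hCeven hKeven hKdiff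
    hselfadj hbc n m lamn lamm Φn Φn' Φn'' Φm Φm' Φm'' hΦn1 hΦn2 hΦm1 hΦm2 hsymn hsymm hoden hodem
    hsep
end

section
/- Fix real parameters p, q, r, s and a natural number m with (2i+1)q + s ≠ 0 for all integers 0 ≤ i ≤ m-1. Then the polynomial function Φ(x) = S_{2m}(p,q,r,s;x) satisfies, for every real x, the differential equation x(px² + q)Φ''(x) + (rx² + s)Φ'(x) − 2m(r + (2m−1)p)·x·Φ(x) = 0. -/
open Finset Real MeasureTheory

/-- The basic class of symmetric orthogonal polynomials `S_n(p,q,r,s;x)`. -/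
noncomputable def S (p q r s : ℝ) (n : ℕ) (x : ℝ) : ℝ :=
  ∑ k ∈ Finset.range (n / 2 + 1),
    (Nat.choose (n / 2) k : ℝ) *
      (∏ i ∈ Finset.range (n / 2 - k),
        ((2 * (i : ℝ) + (-1 : ℝ) ^ (n + 1) + 2 * ((n / 2 : ℕ) : ℝ)) * p + r) /
        ((2 * (i : ℝ) + (-1 : ℝ) ^ (n + 1) + 2) * q + s)) *
      x ^ (n - 2 * k)

/-- The monic normalization `S̄_n(p,q,r,s;x)`. -/
noncomputable def Sbar (p q r s : ℝ) (n : ℕ) (x : ℝ) : ℝ :=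
  (∏ i ∈ Finset.range (n / 2),
    ((2 * (i : ℝ) + (-1 : ℝ) ^ (n + 1) + 2) * q + s) /
    ((2 * (i : ℝ) + (-1 : ℝ) ^ (n + 1) + 2 * ((n / 2 : ℕ) : ℝ)) * p + r)) *
    S p q r s n x

/-! Write `Φ = ∑_{j ≤ m} a_j x^{2j}`. The operator `L = x(px²+q)D² + (rx²+s)D − μx` sends `x^{2j}`
to `(2j((2j−1)p+r) − μ) x^{2j+1} + 2j((2j−1)q+s) x^{2j−1}`, so the two-term recurrence
`(2j+2)((2j+1)q+s) a_{j+1} = (μ − 2j((2j−1)p+r)) a_j` makes `L Φ` telescope to zero.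
The coefficients of `S_{2m}` satisfy it with `μ = 2m(r+(2m−1)p)`: for `j < m` by
`(j+1) C(m,j+1) = (m−j) C(m,j)`, and for `j = m` because `a_{m+1} = 0 = μ − 2m((2m−1)p+r)`. -/
theorem hasDerivAt_sum_monomial {ι : Type*} (s : Finset ι) (a : ι → ℝ) (e : ι → ℕ) (x : ℝ) :
    HasDerivAt (fun x => ∑ k ∈ s, a k * x ^ e k) (∑ k ∈ s, a k * e k * x ^ (e k - 1)) x :=
  HasDerivAt.fun_sum fun k _ => by
    simpa [mul_assoc] using (hasDerivAt_pow (e k) x).const_mul (a k)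

theorem deriv_sum_monomial {ι : Type*} (s : Finset ι) (a : ι → ℝ) (e : ι → ℕ) :
    deriv (fun x => ∑ k ∈ s, a k * x ^ e k) = fun x => ∑ k ∈ s, a k * e k * x ^ (e k - 1) :=
  funext fun x => (hasDerivAt_sum_monomial s a e x).deriv

theorem even_monomial_ode_identity (p q r s μ x : ℝ) (j : ℕ) :
    x * (p * x ^ 2 + q) * (((2 * j : ℕ) : ℝ) * ((2 * j - 1 : ℕ) : ℝ) * x ^ (2 * j - 1 - 1))
      + (r * x ^ 2 + s) * (((2 * j : ℕ) : ℝ) * x ^ (2 * j - 1)) - μ * x * x ^ (2 * j)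
      = (2 * j * ((2 * j - 1) * p + r) - μ) * x ^ (2 * j + 1)
        + 2 * j * ((2 * j - 1) * q + s) * x ^ (2 * j - 1) := by
  rcases j with _ | i
  · simp
  · rw [show 2 * (i + 1) - 1 = 2 * i + 1 by omega, show 2 * i + 1 - 1 = 2 * i by omega]
    push_cast
    ring

theorem even_poly_ode_of_recurrence (p q r s μ : ℝ) (a : ℕ → ℝ) (n : ℕ) (hn : a n = 0)
    (hrec : ∀ j < n, (2 * j + 2) * ((2 * j + 1) * q + s) * a (j + 1)
      = (μ - 2 * j * ((2 * j - 1) * p + r)) * a j) (x : ℝ) :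
    let f := fun x : ℝ => ∑ j ∈ range n, a j * x ^ (2 * j)
    x * (p * x ^ 2 + q) * deriv (deriv f) x + (r * x ^ 2 + s) * deriv f x - μ * x * f x = 0 := by
  intro f
  set g : ℕ → ℝ := fun j => a j * (2 * j) * ((2 * j - 1) * q + s) * x ^ (2 * j - 1) with hg
  have hterm : ∀ j ∈ range n,
      x * (p * x ^ 2 + q) * (a j * ((2 * j : ℕ) : ℝ) * ((2 * j - 1 : ℕ) : ℝ) * x ^ (2 * j - 1 - 1))
        + (r * x ^ 2 + s) * (a j * ((2 * j : ℕ) : ℝ) * x ^ (2 * j - 1))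
        - μ * x * (a j * x ^ (2 * j))
        = g j - g (j + 1) := by
    intro j hj
    have := congrArg (a j * ·) (even_monomial_ode_identity p q r s μ x j)
    simp only [hg]
    rw [show 2 * (j + 1) - 1 = 2 * j + 1 by omega]
    push_cast at this ⊢
    linear_combination this + x ^ (2 * j + 1) * hrec j (mem_range.mp hj)
  simp only [f, deriv_sum_monomial]
  rw [mul_sum, mul_sum, mul_sum, ← sum_add_distrib, ← sum_sub_distrib, sum_congr rfl hterm,
    sum_range_sub']
  simp [hg, hn]

noncomputable def evenCoeff (p q r s : ℝ) (m j : ℕ) : ℝ :=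
  m.choose j * ∏ i ∈ range j, ((2 * (i : ℝ) + 2 * m - 1) * p + r) / ((2 * (i : ℝ) + 1) * q + s)

theorem evenCoeff_eq_zero_of_lt (p q r s : ℝ) {m j : ℕ} (h : m < j) :
    evenCoeff p q r s m j = 0 := by
  simp [evenCoeff, Nat.choose_eq_zero_of_lt h]

theorem S_two_mul_eq (p q r s : ℝ) (m : ℕ) :
    S p q r s (2 * m) = fun x => ∑ j ∈ range (m + 1), evenCoeff p q r s m j * x ^ (2 * j) := by
  funext x
  rw [S, Nat.mul_div_cancel_left m two_pos, ← sum_range_reflect]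
  refine sum_congr rfl fun k hk => ?_
  have hkm : k ≤ m := Nat.lt_succ_iff.mp (mem_range.mp hk)
  rw [show m + 1 - 1 - k = m - k by omega, Nat.choose_symm hkm, Nat.sub_sub_self hkm,
    show 2 * m - 2 * (m - k) = 2 * k by omega, Odd.neg_one_pow ⟨m, rfl⟩, evenCoeff]
  congr 2
  refine prod_congr rfl fun i _ => ?_
  ring_nf

theorem evenCoeff_recurrence (p q r s : ℝ) {m j : ℕ} (hj : j ≤ m)
    (hden : j < m → (2 * (j : ℝ) + 1) * q + s ≠ 0) :
    (2 * j + 2) * ((2 * j + 1) * q + s) * evenCoeff p q r s m (j + 1)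
      = (2 * m * (r + (2 * m - 1) * p) - 2 * j * ((2 * j - 1) * p + r))
        * evenCoeff p q r s m j := by
  rcases hj.lt_or_eq with hjm | rfl
  · have hchoose : (m.choose (j + 1) : ℝ) * (j + 1) = m.choose j * (m - j) := by
      have := congrArg (Nat.cast : ℕ → ℝ) (Nat.choose_succ_right_eq m j)
      push_cast [Nat.cast_sub hjm.le] at this
      exact this
    rw [evenCoeff, evenCoeff, prod_range_succ]
    generalize (∏ i ∈ range j,
      ((2 * (i : ℝ) + 2 * m - 1) * p + r) / ((2 * (i : ℝ) + 1) * q + s)) = P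
    field_simp [hden hjm]
    linear_combination P * ((2 * (j : ℝ) + 2 * m - 1) * p + r) * hchoose
  · rw [evenCoeff_eq_zero_of_lt p q r s (Nat.lt_succ_self j)]
    ring

/-- The even-degree member `Φ = S_{2m}(p,q,r,s;·)` of the basic class satisfies the
differential equation `x(px²+q)Φ''(x) + (rx²+s)Φ'(x) − 2m(r+(2m−1)p)·x·Φ(x) = 0`. -/
theorem S_even_degree_ode (p q r s : ℝ) (m : ℕ)
    (hden : ∀ i : ℕ, i < m → (2 * (i : ℝ) + 1) * q + s ≠ 0) :
    ∀ x : ℝ,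
      x * (p * x ^ 2 + q) * deriv (deriv (S p q r s (2 * m))) x
        + (r * x ^ 2 + s) * deriv (S p q r s (2 * m)) x
        - 2 * (m : ℝ) * (r + (2 * (m : ℝ) - 1) * p) * x * S p q r s (2 * m) x = 0 := by
  rw [S_two_mul_eq]
  exact even_poly_ode_of_recurrence p q r s _ _ (m + 1)
    (evenCoeff_eq_zero_of_lt p q r s (Nat.lt_succ_self m))
    fun j hj => evenCoeff_recurrence p q r s (Nat.lt_succ_iff.mp hj) (hden j)
end

section
/- Fix real parameters p, q, r, s and a natural number m with (2i+3)q + s ≠ 0 for all integers 0 ≤ i ≤ m-1. Then the polynomial function Φ(x) = S_{2m+1}(p,q,r,s;x) satisfies, for every real x, the differential equation x²(px² + q)Φ''(x) + x(rx² + s)Φ'(x) − ((2m+1)(r + 2mp)x² + s)Φ(x) = 0. -/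
open Finset Real MeasureTheory

/-!
Reindexing by `j = m - k` writes `Φ = ∑ a_j x^(2j+1)`. With `λ(e) = p e (e-1) + r e`, the operator
of the equation sends `x^e` to `(λ(e) - λ(2m+1)) x^(e+2) + (e-1)(e q + s) x^e`, and
`λ(2j+1) - λ(2m+1) = -2 (m-j) ((2j+2m+1) p + r)`. So the coefficient of `x^(2j+3)` in the result is
`2 ((j+1) ((2j+3) q + s) a_(j+1) - (m-j) ((2j+2m+1) p + r) a_j)`, which vanishes by the ratio
`a_(j+1) / a_j`; the extreme terms vanish because `e = 1` and `e = 2m+1` there.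
-/

section SumPow

variable {ι : Type*} (s : Finset ι) (c : ι → ℝ) (e : ι → ℕ)

theorem deriv_sum_mul_pow :
    deriv (fun y : ℝ => ∑ j ∈ s, c j * y ^ e j) = fun y => ∑ j ∈ s, c j * e j * y ^ (e j - 1) := by
  funext x
  refine (HasDerivAt.fun_sum fun j _ => ?_).deriv
  simpa only [mul_assoc] using (hasDerivAt_pow (e j) x).const_mul (c j)

theorem mul_deriv_sum_mul_pow (x : ℝ) :
    x * deriv (fun y : ℝ => ∑ j ∈ s, c j * y ^ e j) x = ∑ j ∈ s, c j * e j * x ^ e j := by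
  rw [deriv_sum_mul_pow, mul_sum]
  refine sum_congr rfl fun j _ => ?_
  rcases e j with _ | k
  · simp
  · simp only [Nat.add_sub_cancel, pow_succ]; ring

theorem sq_mul_deriv_deriv_sum_mul_pow (x : ℝ) :
    x ^ 2 * deriv (deriv fun y : ℝ => ∑ j ∈ s, c j * y ^ e j) x
      = ∑ j ∈ s, c j * (e j * (e j - 1)) * x ^ e j := by
  rw [deriv_sum_mul_pow, deriv_sum_mul_pow, mul_sum]
  refine sum_congr rfl fun j _ => ?_
  rcases e j with _ | _ | k
  · simp
  · simp
  · simp only [Nat.add_sub_cancel, pow_succ]; push_cast; ring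

end SumPow

theorem Finset.sum_range_succ_add_eq_zero {M : Type*} [AddCommMonoid M] (f g : ℕ → M) (n : ℕ)
    (hf : f n = 0) (hg : g 0 = 0) (h : ∀ j < n, f j + g (j + 1) = 0) :
    ∑ j ∈ range (n + 1), (f j + g j) = 0 := by
  rw [sum_add_distrib, sum_range_succ, sum_range_succ' g, hf, hg, add_zero, add_zero,
    ← sum_add_distrib]
  exact sum_eq_zero fun j hj => h j (mem_range.mp hj)

/-- The coefficient of `x ^ (2 * j + 1)` in `S p q r s (2 * m + 1)`. -/
noncomputable def oddCoeff (p q r s : ℝ) (m j : ℕ) : ℝ :=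
  m.choose j * ∏ i ∈ range j, ((2 * i + 1 + 2 * m) * p + r) / ((2 * i + 3) * q + s)

theorem S_odd_eq_sum_oddCoeff (p q r s : ℝ) (m : ℕ) (x : ℝ) :
    S p q r s (2 * m + 1) x = ∑ j ∈ range (m + 1), oddCoeff p q r s m j * x ^ (2 * j + 1) := by
  have hhalf : (2 * m + 1) / 2 = m := by omega
  have hsign : (-1 : ℝ) ^ (2 * m + 1 + 1) = 1 := by
    rw [show 2 * m + 1 + 1 = 2 * (m + 1) by ring, pow_mul]; norm_num
  rw [S, hhalf, hsign, ← sum_range_reflect]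
  refine sum_congr rfl fun j hj => ?_
  have hjm : j ≤ m := Nat.lt_succ_iff.mp (mem_range.mp hj)
  rw [show m + 1 - 1 - j = m - j by omega, Nat.choose_symm hjm, Nat.sub_sub_self hjm,
    show 2 * m + 1 - 2 * (m - j) = 2 * j + 1 by omega, oddCoeff]
  congr 3 with i
  ring_nf

theorem oddCoeff_succ_mul (p q r s : ℝ) {m j : ℕ} (hj : j < m)
    (hden : (2 * (j : ℝ) + 3) * q + s ≠ 0) :
    oddCoeff p q r s m (j + 1) * ((j + 1) * ((2 * j + 3) * q + s))
      = oddCoeff p q r s m j * ((m - j) * ((2 * j + 1 + 2 * m) * p + r)) := by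
  have hchoose : (m.choose (j + 1) : ℝ) * (j + 1) = m.choose j * (m - j) := by
    rw [← Nat.cast_sub hj.le]
    exact_mod_cast Nat.choose_succ_right_eq m j
  rw [oddCoeff, oddCoeff, prod_range_succ]
  set P := ∏ i ∈ range j, ((2 * (i : ℝ) + 1 + 2 * m) * p + r) / ((2 * i + 3) * q + s)
  set α := (2 * (j : ℝ) + 1 + 2 * m) * p + r
  have hcancel : α / ((2 * j + 3) * q + s) * ((2 * j + 3) * q + s) = α := div_mul_cancel₀ α hden
  linear_combination (P * α) * hchoose + (m.choose (j + 1) * (j + 1) * P) * hcancel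

/-- The odd-degree member `Φ = S_{2m+1}(p,q,r,s;·)` of the basic class satisfies the
differential equation `x²(px²+q)Φ''(x) + x(rx²+s)Φ'(x) − ((2m+1)(r+2mp)x²+s)Φ(x) = 0`. -/
theorem S_odd_degree_ode (p q r s : ℝ) (m : ℕ)
    (hden : ∀ i : ℕ, i < m → (2 * (i : ℝ) + 3) * q + s ≠ 0) :
    ∀ x : ℝ,
      x ^ 2 * (p * x ^ 2 + q) * deriv (deriv (S p q r s (2 * m + 1))) x
        + x * (r * x ^ 2 + s) * deriv (S p q r s (2 * m + 1)) x
        - ((2 * (m : ℝ) + 1) * (r + 2 * (m : ℝ) * p) * x ^ 2 + s)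
            * S p q r s (2 * m + 1) x = 0 := by
  intro x
  have hΦ : S p q r s (2 * m + 1)
      = fun y => ∑ j ∈ range (m + 1), oddCoeff p q r s m j * y ^ (2 * j + 1) :=
    funext (S_odd_eq_sum_oddCoeff p q r s m)
  set a := oddCoeff p q r s m
  set Φ := S p q r s (2 * m + 1)
  calc _ = (p * x ^ 2 + q) * (x ^ 2 * deriv (deriv Φ) x) + (r * x ^ 2 + s) * (x * deriv Φ x)
        - ((2 * (m : ℝ) + 1) * (r + 2 * (m : ℝ) * p) * x ^ 2 + s) * Φ x := by
        ring
    _ = ∑ j ∈ range (m + 1),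
          (a j * (-2 * ((m - j) * ((2 * j + 1 + 2 * m) * p + r))) * x ^ (2 * j + 3)
            + a j * (2 * (j * ((2 * j + 1) * q + s))) * x ^ (2 * j + 1)) := by
        rw [hΦ, sq_mul_deriv_deriv_sum_mul_pow, mul_deriv_sum_mul_pow, mul_sum, mul_sum, mul_sum,
          ← sum_add_distrib, ← sum_sub_distrib]
        refine sum_congr rfl fun j _ => ?_
        push_cast
        ring
    _ = 0 := by
        refine sum_range_succ_add_eq_zero _ _ m (by simp) (by simp) fun j hj => ?_
        push_cast
        linear_combination (2 * x ^ (2 * j + 3)) * oddCoeff_succ_mul p q r s hj (hden j hj)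
end

section
/- Fix real parameters p, q, r, s and a natural number n ≥ 1. Assume (2pn + r − p)(2pn + r − 3p) ≠ 0 and that all monic-normalization denominators are nonzero, i.e. (2i + (−1)^{k+1} + 2)q + s ≠ 0 and (2i + (−1)^{k+1} + 2⌊k/2⌋)p + r ≠ 0 for each k ∈ {n−1, n, n+1} and each 0 ≤ i ≤ ⌊k/2⌋ − 1. Then for every real x, S̄_{n+1}(p,q,r,s;x) = x·S̄_n(p,q,r,s;x) + C_n(p,q,r,s)·S̄_{n−1}(p,q,r,s;x), where C_n(p,q,r,s) = (pqn² + ((r−2p)q − (−1)ⁿ p s)n + (r−2p)s(1−(−1)ⁿ)/2)/((2pn + r − p)(2pn + r − 3p)). -/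
open Finset Real MeasureTheory

/-!
Write `S̄_n(x) = ∑ₖ c(n,k) x^(n-2k)`. The normalisation turns `c(n,k)` into `binom(⌊n/2⌋, k)`
times a product of `k` consecutive ratios `((2i+1)q+s)/((2t-1)p+r)`, so the recurrence amounts
to the coefficient identity `c(n+1,k+1) = c(n,k+1) + C_n c(n-1,k)`. Telescoping the shifted
denominators writes the three products as one common product times boundary factors; what is
left is a scalar identity, which follows from `(k+1) binom(m+1,k+1) = (m+1) binom(m,k)` for
even `n` and from Pascal's rule for odd `n`.
-/

lemma prod_range_mul_prod_range_inv_eq_prod_Ico {K : Type*} [CommGroupWithZero K] (u : ℕ → K)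
    {j N : ℕ} (hu : ∀ i < j, u i ≠ 0) (hjN : j ≤ N) :
    (∏ i ∈ range N, u i) * ∏ i ∈ range j, (u i)⁻¹ = ∏ i ∈ Ico j N, u i := by
  rw [← prod_range_mul_prod_Ico u hjN, mul_right_comm, ← prod_mul_distrib,
    prod_eq_one fun i hi => mul_inv_cancel₀ (hu i (mem_range.1 hi)), one_mul]

lemma prod_Ico_div_mul_eq_prod_Ico_div_succ_mul {K : Type*} [CommGroupWithZero K]
    (u g : ℕ → K) {a b : ℕ} (hab : a ≤ b) (hg : ∀ i ∈ Icc a b, g i ≠ 0) :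
    (∏ i ∈ Ico a b, u i / g i) * g a = (∏ i ∈ Ico a b, u i / g (i + 1)) * g b := by
  induction b, hab using Nat.le_induction with
  | base => simp
  | succ b hab ih =>
    have hb : g b ≠ 0 := hg b (mem_Icc.2 ⟨hab, by omega⟩)
    have hb' : g (b + 1) ≠ 0 := hg (b + 1) (mem_Icc.2 ⟨by omega, le_rfl⟩)
    rw [prod_Ico_succ_top hab, prod_Ico_succ_top hab, mul_right_comm,
      ih fun i hi => hg i (Icc_subset_Icc_right (Nat.le_succ b) hi)]
    field_simp

lemma sum_mul_pow_eq_of_coeff_recurrence {R : Type*} [CommRing R] (u v w : ℕ → R) (C x : R)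
    (n L : ℕ) (h₀ : u 0 = v 0) (hrec : ∀ k < L, u (k + 1) = v (k + 1) + C * w k) :
    ∑ k ∈ range (L + 1), u k * x ^ (n + 1 - 2 * k)
      = ∑ k ∈ range (L + 1), v k * x ^ (n + 1 - 2 * k)
        + C * ∑ k ∈ range L, w k * x ^ (n - 1 - 2 * k) := by
  rw [sum_range_succ', sum_range_succ', h₀, mul_sum, add_right_comm, ← sum_add_distrib]
  congr 1
  refine sum_congr rfl fun k hk => ?_
  rw [hrec k (mem_range.1 hk), show n + 1 - 2 * (k + 1) = n - 1 - 2 * k by omega]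
  ring

noncomputable def numFactor (q s : ℝ) (i : ℕ) : ℝ := (2 * i + 1) * q + s

noncomputable def denFactor (p r : ℝ) (t : ℕ) : ℝ := (2 * t - 1) * p + r

lemma numerator_eq_numFactor (q s : ℝ) (n i : ℕ) :
    (2 * (i : ℝ) + (-1 : ℝ) ^ (n + 1) + 2) * q + s = numFactor q s (i + n % 2) := by
  obtain ⟨m, rfl | rfl⟩ := Nat.even_or_odd' n
  · rw [Odd.neg_one_pow ⟨m, rfl⟩, show 2 * m % 2 = 0 by omega, numFactor]
    push_cast
    ring
  · rw [Even.neg_one_pow ⟨m + 1, by ring⟩, show (2 * m + 1) % 2 = 1 by omega, numFactor]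
    push_cast
    ring

lemma denominator_eq_denFactor (p r : ℝ) (n i : ℕ) :
    (2 * (i : ℝ) + (-1 : ℝ) ^ (n + 1) + 2 * ((n / 2 : ℕ) : ℝ)) * p + r
      = denFactor p r (i + (n + 1) / 2) := by
  obtain ⟨m, rfl | rfl⟩ := Nat.even_or_odd' n
  · rw [Odd.neg_one_pow ⟨m, rfl⟩, show 2 * m / 2 = m by omega,
      show (2 * m + 1) / 2 = m by omega, denFactor]
    push_cast
    ring
  · rw [Even.neg_one_pow ⟨m + 1, by ring⟩, show (2 * m + 1) / 2 = m by omega,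
      show (2 * m + 1 + 1) / 2 = m + 1 by omega, denFactor]
    push_cast
    ring

noncomputable def monicCoeff (p q r s : ℝ) (n k : ℕ) : ℝ :=
  (n / 2).choose k * ∏ i ∈ Ico (n / 2 - k) (n / 2),
    numFactor q s (i + n % 2) / denFactor p r (i + (n + 1) / 2)

lemma Sbar_eq_sum_monicCoeff {p q r s : ℝ} {n : ℕ}
    (hden : ∀ i : ℕ, i < n / 2 →
      (2 * (i : ℝ) + (-1 : ℝ) ^ (n + 1) + 2) * q + s ≠ 0 ∧
      (2 * (i : ℝ) + (-1 : ℝ) ^ (n + 1) + 2 * ((n / 2 : ℕ) : ℝ)) * p + r ≠ 0) (x : ℝ) :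
    Sbar p q r s n x = ∑ k ∈ range (n / 2 + 1), monicCoeff p q r s n k * x ^ (n - 2 * k) := by
  simp only [numerator_eq_numFactor, denominator_eq_denFactor] at hden
  simp only [Sbar, S, numerator_eq_numFactor, denominator_eq_denFactor, monicCoeff, mul_sum]
  refine sum_congr rfl fun k _ => ?_
  have h := prod_range_mul_prod_range_inv_eq_prod_Ico
    (fun i => numFactor q s (i + n % 2) / denFactor p r (i + (n + 1) / 2))
    (fun i hi => div_ne_zero (hden i (by omega)).1 (hden i (by omega)).2) (Nat.sub_le (n / 2) k)
  simp only [inv_div] at h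
  rw [← h]
  ring

lemma monicCoeff_zero_right (p q r s : ℝ) (n : ℕ) : monicCoeff p q r s n 0 = 1 := by
  simp [monicCoeff]

lemma mul_Sbar_eq_sum_monicCoeff {p q r s : ℝ} {n : ℕ}
    (hden : ∀ i : ℕ, i < n / 2 →
      (2 * (i : ℝ) + (-1 : ℝ) ^ (n + 1) + 2) * q + s ≠ 0 ∧
      (2 * (i : ℝ) + (-1 : ℝ) ^ (n + 1) + 2 * ((n / 2 : ℕ) : ℝ)) * p + r ≠ 0) (x : ℝ) :
    x * Sbar p q r s n x
      = ∑ k ∈ range ((n + 1) / 2 + 1), monicCoeff p q r s n k * x ^ (n + 1 - 2 * k) := calc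
  _ = ∑ k ∈ range (n / 2 + 1), monicCoeff p q r s n k * x ^ (n + 1 - 2 * k) := by
    rw [Sbar_eq_sum_monicCoeff hden, mul_sum]
    refine sum_congr rfl fun k hk => ?_
    rw [show n + 1 - 2 * k = n - 2 * k + 1 by grind, pow_succ]
    ring
  _ = _ := sum_subset (range_subset_range.2 (by omega)) fun k _ hk => by
    rw [monicCoeff, Nat.choose_eq_zero_of_lt (by grind), Nat.cast_zero, zero_mul, zero_mul]

lemma monicCoeff_two_mul (p q r s : ℝ) (m k : ℕ) :
    monicCoeff p q r s (2 * m) k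
      = m.choose k * ∏ i ∈ Ico (m - k) m, numFactor q s i / denFactor p r (i + m) := by
  rw [monicCoeff, show 2 * m / 2 = m by omega, show 2 * m % 2 = 0 by omega,
    show (2 * m + 1) / 2 = m by omega]
  rfl

lemma monicCoeff_two_mul_add_one (p q r s : ℝ) (m k : ℕ) :
    monicCoeff p q r s (2 * m + 1) k
      = m.choose k
        * ∏ i ∈ Ico (m - k) m, numFactor q s (i + 1) / denFactor p r (i + (m + 1)) := by
  rw [monicCoeff, show (2 * m + 1) / 2 = m by omega, show (2 * m + 1) % 2 = 1 by omega,
    show (2 * m + 1 + 1) / 2 = m + 1 by omega]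

lemma monicCoeff_two_mul_add_one_succ (p q r s : ℝ) (m k : ℕ) :
    monicCoeff p q r s (2 * m + 1) (k + 1)
      = m.choose (k + 1)
        * ∏ i ∈ Ico (m - k) (m + 1), numFactor q s i / denFactor p r (i + m) := by
  rw [monicCoeff_two_mul_add_one]
  rcases lt_or_ge k m with hk | hk
  · rw [show m - k = m - (k + 1) + 1 by omega, ← prod_Ico_add' _ (m - (k + 1)) m 1]
    congr 1
    exact prod_congr rfl fun i _ => by rw [show i + 1 + m = i + (m + 1) by omega]
  · rw [Nat.choose_eq_zero_of_lt (by omega), Nat.cast_zero, zero_mul, zero_mul]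

noncomputable def recurrenceCoeff (p q r s : ℝ) (n : ℕ) : ℝ :=
  (p * q * (n : ℝ) ^ 2 + ((r - 2 * p) * q - (-1 : ℝ) ^ n * p * s) * (n : ℝ)
      + (r - 2 * p) * s * (1 - (-1 : ℝ) ^ n) / 2) /
    ((2 * p * (n : ℝ) + r - p) * (2 * p * (n : ℝ) + r - 3 * p))

lemma recurrenceCoeff_two_mul_add_two (p q r s : ℝ) (m : ℕ) :
    recurrenceCoeff p q r s (2 * (m + 1))
      = 2 * (m + 1) * (2 * (m + 1) * p * q + (r - 2 * p) * q - p * s)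
        / (denFactor p r (2 * (m + 1)) * denFactor p r (2 * m + 1)) := by
  rw [recurrenceCoeff, Even.neg_one_pow ⟨m + 1, two_mul _⟩, denFactor, denFactor]
  push_cast
  ring_nf

lemma recurrenceCoeff_two_mul_add_one (p q r s : ℝ) (m : ℕ) :
    recurrenceCoeff p q r s (2 * m + 1)
      = denFactor p r m * numFactor q s m
        / (denFactor p r (2 * m + 1) * denFactor p r (2 * m)) := by
  rw [recurrenceCoeff, Odd.neg_one_pow ⟨m, rfl⟩, denFactor, denFactor, denFactor, numFactor]
  push_cast
  ring_nf

lemma monicCoeff_recurrence_two_mul_add_two {p q r s : ℝ} {m k : ℕ} (hk : k ≤ m)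
    (hα : ∀ t, m + 1 ≤ t → t ≤ 2 * (m + 1) → denFactor p r t ≠ 0) :
    monicCoeff p q r s (2 * (m + 1) + 1) (k + 1)
      = monicCoeff p q r s (2 * (m + 1)) (k + 1)
        + recurrenceCoeff p q r s (2 * (m + 1)) * monicCoeff p q r s (2 * m + 1) k := by
  obtain ⟨l, rfl⟩ := Nat.exists_eq_add_of_le hk
  rw [monicCoeff_two_mul_add_one, monicCoeff_two_mul, monicCoeff_two_mul_add_one,
    recurrenceCoeff_two_mul_add_two, show k + l + 1 - (k + 1) = l by omega,
    show k + l - k = l by omega]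
  set D := ∏ i ∈ Ico l (k + l), numFactor q s (i + 1) / denFactor p r (i + 1 + (k + l + 1))
  have h_top : ∏ i ∈ Ico l (k + l + 1),
        numFactor q s (i + 1) / denFactor p r (i + (k + l + 1 + 1))
      = D * (numFactor q s (k + l + 1) / denFactor p r (2 * (k + l + 1))) := by
    rw [prod_Ico_succ_top (by omega), show k + l + (k + l + 1 + 1) = 2 * (k + l + 1) by ring]
    congr 1
    exact prod_congr rfl fun i _ => by
      rw [show i + (k + l + 1 + 1) = i + 1 + (k + l + 1) by omega]
  have h_bot : ∏ i ∈ Ico l (k + l + 1), numFactor q s i / denFactor p r (i + (k + l + 1))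
      = numFactor q s l / denFactor p r (l + (k + l + 1)) * D := by
    rw [prod_eq_prod_Ico_succ_bot (by omega), ← prod_Ico_add' _ l (k + l) 1]
  have h_shift : (∏ i ∈ Ico l (k + l), numFactor q s (i + 1) / denFactor p r (i + (k + l + 1)))
      * denFactor p r (l + (k + l + 1)) = D * denFactor p r (2 * (k + l) + 1) := by
    rw [prod_Ico_div_mul_eq_prod_Ico_div_succ_mul _ (fun i => denFactor p r (i + (k + l + 1)))
      (Nat.le_add_left l k) fun i hi => hα _ (by grind) (by grind),
      show k + l + (k + l + 1) = 2 * (k + l) + 1 by ring]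
  have hα₀ : denFactor p r (l + (k + l + 1)) ≠ 0 := hα _ (by omega) (by omega)
  have hα₁ : denFactor p r (2 * (k + l + 1)) ≠ 0 := hα _ (by omega) le_rfl
  have hα₂ : denFactor p r (2 * (k + l) + 1) ≠ 0 := hα _ (by omega) (by omega)
  have hchoose : ((k + l + 1).choose (k + 1) : ℝ)
      = (k + l + 1) * (k + l).choose k / (k + 1) := by
    rw [eq_div_iff (by positivity)]
    exact_mod_cast (Nat.add_one_mul_choose_eq (k + l) k).symm
  rw [h_top, h_bot, eq_div_of_mul_eq hα₀ h_shift, hchoose]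
  clear_value D
  field_simp
  simp only [numFactor, denFactor]
  push_cast
  ring

lemma monicCoeff_recurrence_two_mul_add_one {p q r s : ℝ} {m k : ℕ} (hk : k ≤ m)
    (hα : ∀ t, m ≤ t → t ≤ 2 * m + 1 → denFactor p r t ≠ 0) :
    monicCoeff p q r s (2 * (m + 1)) (k + 1)
      = monicCoeff p q r s (2 * m + 1) (k + 1)
        + recurrenceCoeff p q r s (2 * m + 1) * monicCoeff p q r s (2 * m) k := by
  obtain ⟨l, rfl⟩ := Nat.exists_eq_add_of_le hk
  rw [monicCoeff_two_mul, monicCoeff_two_mul_add_one_succ, monicCoeff_two_mul,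
    recurrenceCoeff_two_mul_add_one, show k + l + 1 - (k + 1) = l by omega,
    show k + l - k = l by omega]
  set D := ∏ i ∈ Ico l (k + l), numFactor q s i / denFactor p r (i + 1 + (k + l))
  set R := ∏ i ∈ Ico l (k + l), numFactor q s i / denFactor p r (i + (k + l))
  have h_top : ∏ i ∈ Ico l (k + l + 1), numFactor q s i / denFactor p r (i + (k + l + 1))
      = D * (numFactor q s (k + l) / denFactor p r (2 * (k + l) + 1)) := by
    rw [prod_Ico_succ_top (by omega), show k + l + (k + l + 1) = 2 * (k + l) + 1 by ring]
    congr 1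
    exact prod_congr rfl fun i _ => by rw [show i + (k + l + 1) = i + 1 + (k + l) by omega]
  have h_mid : ∏ i ∈ Ico l (k + l + 1), numFactor q s i / denFactor p r (i + (k + l))
      = R * (numFactor q s (k + l) / denFactor p r (2 * (k + l))) := by
    rw [prod_Ico_succ_top (by omega), two_mul]
  have h_shift : R * denFactor p r (l + (k + l)) = D * denFactor p r (2 * (k + l)) := by
    rw [prod_Ico_div_mul_eq_prod_Ico_div_succ_mul _ (fun i => denFactor p r (i + (k + l)))
      (Nat.le_add_left l k) fun i hi => hα _ (by grind) (by grind), two_mul]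
  have hα₀ : denFactor p r (l + (k + l)) ≠ 0 := hα _ (by omega) (by omega)
  have hα₁ : denFactor p r (2 * (k + l) + 1) ≠ 0 := hα _ (by omega) le_rfl
  have hα₂ : denFactor p r (2 * (k + l)) ≠ 0 := hα _ (by omega) (by omega)
  have hchoose : ((k + l).choose (k + 1) : ℝ) = (k + l).choose k * l / (k + 1) := by
    rw [eq_div_iff (by positivity)]
    have h := Nat.choose_succ_right_eq (k + l) k
    rw [Nat.add_sub_cancel_left] at h
    exact_mod_cast h
  have hpascal : ((k + l + 1).choose (k + 1) : ℝ)
      = (k + l).choose k + (k + l).choose (k + 1) := by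
    exact_mod_cast Nat.choose_succ_succ' (k + l) k
  rw [h_top, h_mid, eq_div_of_mul_eq hα₀ h_shift, hpascal, hchoose]
  clear_value D R
  field_simp
  simp only [numFactor, denFactor]
  push_cast
  ring

lemma monicCoeff_recurrence {p q r s : ℝ} {n k : ℕ} (hn : 1 ≤ n)
    (hα : ∀ t, n / 2 ≤ t → t ≤ n → denFactor p r t ≠ 0) (hk : k < (n + 1) / 2) :
    monicCoeff p q r s (n + 1) (k + 1)
      = monicCoeff p q r s n (k + 1)
        + recurrenceCoeff p q r s n * monicCoeff p q r s (n - 1) k := by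
  obtain ⟨m, rfl | rfl⟩ : ∃ m, n = 2 * (m + 1) ∨ n = 2 * m + 1 :=
    ⟨(n - 1) / 2, by omega⟩
  · rw [show 2 * (m + 1) - 1 = 2 * m + 1 by omega]
    exact monicCoeff_recurrence_two_mul_add_two (by omega) fun t h₁ h₂ => hα t (by omega) h₂
  · rw [show 2 * m + 1 + 1 = 2 * (m + 1) by ring, Nat.add_sub_cancel]
    exact monicCoeff_recurrence_two_mul_add_one (by omega) fun t h₁ h₂ => hα t (by omega) h₂

lemma denFactor_ne_zero {p r : ℝ} {n t : ℕ} (hn : 1 ≤ n)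
    (hquad : (2 * p * (n : ℝ) + r - p) * (2 * p * (n : ℝ) + r - 3 * p) ≠ 0)
    (hden : ∀ i : ℕ, i < (n - 1) / 2 →
      (2 * (i : ℝ) + (-1 : ℝ) ^ (n - 1 + 1) + 2 * (((n - 1) / 2 : ℕ) : ℝ)) * p + r ≠ 0)
    (ht₁ : n / 2 ≤ t) (ht₂ : t ≤ n) : denFactor p r t ≠ 0 := by
  -- `hden` covers `n / 2 ≤ t < n - 1`; `hquad` is `denFactor p r n * denFactor p r (n - 1) ≠ 0`.
  obtain ⟨hn₀, hn₁⟩ := mul_ne_zero_iff.1 hquad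
  rcases (by omega : t < n - 1 ∨ t = n - 1 ∨ t = n) with ht | rfl | rfl
  · have h := hden (t - n / 2) (by omega)
    rwa [denominator_eq_denFactor, show t - n / 2 + (n - 1 + 1) / 2 = t by omega] at h
  · convert hn₁ using 1
    rw [denFactor, Nat.cast_sub hn]
    push_cast
    ring
  · convert hn₀ using 1
    rw [denFactor]
    ring

/-- Three-term recurrence relation for the monic polynomials:
`S̄_{n+1}(x) = x·S̄_n(x) + C_n(p,q,r,s)·S̄_{n−1}(x)`. -/
theorem Sbar_recurrence (p q r s : ℝ) (n : ℕ) (hn : 1 ≤ n)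
    (hquad : (2 * p * (n : ℝ) + r - p) * (2 * p * (n : ℝ) + r - 3 * p) ≠ 0)
    (hden : ∀ k ∈ ({n - 1, n, n + 1} : Finset ℕ), ∀ i : ℕ, i < k / 2 →
      (2 * (i : ℝ) + (-1 : ℝ) ^ (k + 1) + 2) * q + s ≠ 0 ∧
      (2 * (i : ℝ) + (-1 : ℝ) ^ (k + 1) + 2 * ((k / 2 : ℕ) : ℝ)) * p + r ≠ 0) :
    ∀ x : ℝ,
      Sbar p q r s (n + 1) x =
        x * Sbar p q r s n x +
          ((p * q * (n : ℝ) ^ 2 + ((r - 2 * p) * q - (-1 : ℝ) ^ n * p * s) * (n : ℝ)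
              + (r - 2 * p) * s * (1 - (-1 : ℝ) ^ n) / 2) /
            ((2 * p * (n : ℝ) + r - p) * (2 * p * (n : ℝ) + r - 3 * p)))
            * Sbar p q r s (n - 1) x := by
  intro x
  have hα (t : ℕ) : n / 2 ≤ t → t ≤ n → denFactor p r t ≠ 0 :=
    denFactor_ne_zero hn hquad fun i hi => (hden (n - 1) (by simp) i hi).2
  rw [Sbar_eq_sum_monicCoeff (hden (n + 1) (by simp)),
    mul_Sbar_eq_sum_monicCoeff (hden n (by simp)), Sbar_eq_sum_monicCoeff (hden (n - 1) (by simp)),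
    show (n - 1) / 2 + 1 = (n + 1) / 2 by omega]
  exact sum_mul_pow_eq_of_coeff_recurrence _ _ _ _ x n _
    (by rw [monicCoeff_zero_right, monicCoeff_zero_right])
    fun k hk => monicCoeff_recurrence hn hα hk
end

section
/- Fix real parameters p, q, r, s with p ≠ 0 and q ≠ 0, and a natural number n. Assume (2i + (−1)^{n+1} + 2)q + s ≠ 0 and (2i + (−1)^{n+1} + 2⌊n/2⌋)p + r ≠ 0 for 0 ≤ i ≤ ⌊n/2⌋ − 1, and that the Pochhammer values (−(r + (2n−3)p)/(2p))_k are nonzero for 0 ≤ k ≤ ⌊n/2⌋. Then for every real x, S̄_n(p,q,r,s;x) = Σ_{k=0}^{⌊n/2⌋} [ (−⌊n/2⌋)_k · ((q−s)/(2q) − ⌊(n+1)/2⌋)_k / ( (−(r + (2n−3)p)/(2p))_k · k! ) ] · (−q/p)^k · x^{n−2k}, i.e. S̄_n has the terminating Gauss hypergeometric representation x^n · ₂F₁(−⌊n/2⌋, (q−s)/(2q) − ⌊(n+1)/2⌋; −(r + (2n−3)p)/(2p); −q/(px²)). -/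
/-!
Write `m = ⌊n/2⌋`, `A i` and `B i` for the numerator and denominator factors of `S_n`. After
multiplying by the normalising product `∏_{i<m} B i / A i`, the `k`-th coefficient of `S_n`
keeps only the last `k` quotients `B i / A i`, `m - k ≤ i < m`. Both `A` and `B` are affine in
`i`, so these `k` factors read backwards are Pochhammer symbols:
`∏ B i = (-2q)^k ((q-s)/(2q) - ⌊(n+1)/2⌋)_k` and `∏ A i = (-2p)^k (-(r+(2n-3)p)/(2p))_k`, where
the parity of `n` enters through `(-1)^(n+1) = 2n - 4m - 1`. Finally
`binomial(m, k) = (-1)^k (-m)_k / k!`.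
-/

open Finset Real MeasureTheory

/-- The Pochhammer symbol `(a)_k = a(a+1)⋯(a+k−1)`. -/
noncomputable def poch (a : ℝ) (k : ℕ) : ℝ := ∏ i ∈ Finset.range k, (a + i)

lemma poch_neg_natCast (m k : ℕ) : poch (-(m : ℝ)) k = (-1) ^ k * m.descFactorial k := by
  induction k with
  | zero => simp [poch]
  | succ k ih =>
    rw [poch, prod_range_succ, ← poch, ih, Nat.descFactorial_succ]
    rcases le_or_gt k m with hkm | hmk
    · push_cast [Nat.cast_sub hkm]
      ring
    · simp [Nat.descFactorial_eq_zero_iff_lt.mpr hmk]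

lemma poch_neg_natCast_eq_choose (m k : ℕ) :
    poch (-(m : ℝ)) k = (-1) ^ k * k.factorial * m.choose k := by
  rw [poch_neg_natCast, Nat.descFactorial_eq_factorial_mul_choose]
  push_cast
  ring

lemma prod_Ico_affine_eq_poch {f : ℕ → ℝ} {d : ℝ} (hd : d ≠ 0) {e : ℝ}
    (hf : ∀ i : ℕ, f i = d * i + e) {k m : ℕ} (hkm : k ≤ m) :
    ∏ i ∈ Ico (m - k) m, f i = (-d) ^ k * poch (-(d * (m - 1) + e) / d) k := by
  simp only [hf]
  rw [poch, ← card_range k, ← prod_const, card_range, ← prod_mul_distrib,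
    ← prod_range_reflect _ k, prod_Ico_eq_prod_range, Nat.sub_sub_self hkm]
  refine prod_congr rfl fun j hj => ?_
  have hjk : j < k := mem_range.mp hj
  push_cast [Nat.cast_sub hkm, Nat.cast_sub (by omega : j ≤ k - 1), Nat.cast_sub (by omega : 1 ≤ k)]
  field_simp
  ring

lemma neg_one_pow_succ_eq (n : ℕ) : (-1 : ℝ) ^ (n + 1) = 2 * n - 4 * (n / 2 : ℕ) - 1 := by
  rcases Nat.even_or_odd' n with ⟨t, rfl | rfl⟩
  · rw [Nat.mul_div_cancel_left t two_pos, pow_succ, pow_mul]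
    push_cast
    ring
  · rw [show (2 * t + 1) / 2 = t by omega, show 2 * t + 1 + 1 = 2 * (t + 1) by ring, pow_mul]
    push_cast
    ring

lemma prod_range_div_mul_prod_range_div {f g : ℕ → ℝ} {j m : ℕ} (hjm : j ≤ m)
    (hf : ∀ i < j, f i ≠ 0) (hg : ∀ i < j, g i ≠ 0) :
    (∏ i ∈ range m, f i / g i) * ∏ i ∈ range j, g i / f i = ∏ i ∈ Ico j m, f i / g i := by
  rw [← prod_range_mul_prod_Ico _ hjm, mul_right_comm, ← prod_mul_distrib,
    prod_eq_one fun i hi => ?_, one_mul]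
  have hi : i < j := mem_range.mp hi
  rw [div_mul_div_comm, mul_comm (g i), div_self (mul_ne_zero (hf i hi) (hg i hi))]

lemma choose_mul_pow_ratio_eq_poch {p : ℝ} (hp : p ≠ 0) (q b : ℝ) {c : ℝ} (hc : c ≠ 0)
    (m k : ℕ) :
    m.choose k * ((-(2 * q)) ^ k * b / ((-(2 * p)) ^ k * c)) =
      poch (-(m : ℝ)) k * b / (c * k.factorial) * (-q / p) ^ k := by
  have hratio : (-(2 * q)) ^ k / (-(2 * p)) ^ k = (-1) ^ k * (-q / p) ^ k := by
    rw [← div_pow, ← mul_pow]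
    congr 1
    field_simp
  have hfac : (k.factorial : ℝ) ≠ 0 := Nat.cast_ne_zero.mpr k.factorial_ne_zero
  rw [poch_neg_natCast_eq_choose, mul_div_mul_comm, hratio]
  field_simp

/-- Terminating Gauss hypergeometric representation of the monic polynomials:
`S̄_n(p,q,r,s;x) = xⁿ · ₂F₁(−⌊n/2⌋, (q−s)/(2q) − ⌊(n+1)/2⌋; −(r+(2n−3)p)/(2p); −q/(px²))`. -/
theorem Sbar_hypergeometric_representation (p q r s : ℝ) (hp : p ≠ 0) (hq : q ≠ 0) (n : ℕ)
    (hden1 : ∀ i : ℕ, i < n / 2 →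
      (2 * (i : ℝ) + (-1 : ℝ) ^ (n + 1) + 2) * q + s ≠ 0)
    (hden2 : ∀ i : ℕ, i < n / 2 →
      (2 * (i : ℝ) + (-1 : ℝ) ^ (n + 1) + 2 * ((n / 2 : ℕ) : ℝ)) * p + r ≠ 0)
    (hpoch : ∀ k : ℕ, k ≤ n / 2 →
      poch (-(r + (2 * (n : ℝ) - 3) * p) / (2 * p)) k ≠ 0) :
    ∀ x : ℝ,
      Sbar p q r s n x =
        ∑ k ∈ Finset.range (n / 2 + 1),
          (poch (-(((n / 2 : ℕ) : ℝ))) k *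
              poch ((q - s) / (2 * q) - (((n + 1) / 2 : ℕ) : ℝ)) k /
            (poch (-(r + (2 * (n : ℝ) - 3) * p) / (2 * p)) k * (Nat.factorial k : ℝ))) *
          (-q / p) ^ k * x ^ (n - 2 * k) := by
  intro x
  have hε := neg_one_pow_succ_eq n
  set m := n / 2
  set B : ℕ → ℝ := fun i => (2 * (i : ℝ) + (-1) ^ (n + 1) + 2) * q + s
  set A : ℕ → ℝ := fun i => (2 * (i : ℝ) + (-1) ^ (n + 1) + 2 * (m : ℝ)) * p + r
  have hM : (m : ℝ) + ((n + 1) / 2 : ℕ) = n := by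
    exact_mod_cast (by omega : n / 2 + (n + 1) / 2 = n)
  unfold Sbar S
  rw [mul_sum]
  refine sum_congr rfl fun k hk => ?_
  have hkm : k ≤ m := Nat.lt_succ_iff.mp (mem_range.mp hk)
  have hB : ∏ i ∈ Ico (m - k) m, B i =
      (-(2 * q)) ^ k * poch ((q - s) / (2 * q) - (((n + 1) / 2 : ℕ) : ℝ)) k := by
    rw [prod_Ico_affine_eq_poch (mul_ne_zero two_ne_zero hq)
      (e := ((-1) ^ (n + 1) + 2) * q + s) (fun i => by ring) hkm]
    congr 2
    field_simp
    linear_combination 2 * q * hM - q * hε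
  have hA : ∏ i ∈ Ico (m - k) m, A i =
      (-(2 * p)) ^ k * poch (-(r + (2 * (n : ℝ) - 3) * p) / (2 * p)) k := by
    rw [prod_Ico_affine_eq_poch (mul_ne_zero two_ne_zero hp)
      (e := ((-1) ^ (n + 1) + 2 * m) * p + r) (fun i => by ring) hkm]
    congr 2
    field_simp
    linear_combination -p * hε
  rw [show ∀ a C P X : ℝ, a * (C * P * X) = C * (a * P) * X from fun _ _ _ _ => by ring,
    prod_range_div_mul_prod_range_div (Nat.sub_le m k)
      (fun i hi => hden1 i (by omega)) (fun i hi => hden2 i (by omega)),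
    prod_div_distrib, hB, hA, choose_mul_pow_ratio_eq_poch hp _ _ (hpoch k hkm)]
end

section
/- Fix real parameters p, q, r, s with p ≠ 0, q ≠ 0 and q/p < 0, and a natural number n. Assume the monic-normalization denominators are nonzero, assume (3/2 − r/(2p) − n)_n ≠ 0, and assume none of the four numbers 3/2 − r/(2p), 1 + s/(2q) − r/(2p), 3/2 − r/(2p) + ⌊n/2⌋ − n, 1 + s/(2q) − r/(2p) − ⌊n/2⌋ is a nonpositive integer. Then S̄_n(p, q, r, s; √(−q/p)) = (−q/p)^{n/2} · Γ(3/2 − r/(2p)) · Γ(1 + s/(2q) − r/(2p)) / [ (3/2 − r/(2p) − n)_n · Γ(3/2 − r/(2p) + ⌊n/2⌋ − n) · Γ(1 + s/(2q) − r/(2p) − ⌊n/2⌋) ]. -/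
open Finset Real MeasureTheory

/-!
With `m = ⌊n/2⌋`, the numerator and denominator factors of `S_n` are `2p (A + i)` and
`2q (B + i)`, so the coefficients of `S̄_n` are ratios of Pochhammer symbols in `A` and `B`.
At `x² = -q/p` the powers of `q/p` and of `x` collapse to `(-1)^k x^n`, and the remaining
alternating sum is the Chu–Vandermonde identity, giving `(B - A)_m / ((-1)^m (A)_m)`.
Reflection turns `(-1)^m (A)_m` into `(3/2 - r/(2p) - n)_m`, and `Γ(a + k) = (a)_k Γ(a)`
converts both Pochhammer symbols into the stated ratio of Gamma values.
-/

lemma poch_succ (a : ℝ) (k : ℕ) : poch a (k + 1) = poch a k * (a + k) :=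
  prod_range_succ _ k

lemma poch_add (a : ℝ) (j l : ℕ) : poch a (j + l) = poch a j * poch (a + j) l := by
  rw [poch, poch, poch, prod_range_add]
  congr 1
  exact prod_congr rfl fun i _ => by push_cast; ring

lemma poch_ne_zero_of_le {a : ℝ} {m n : ℕ} (h : poch a n ≠ 0) (hmn : m ≤ n) : poch a m ≠ 0 := by
  rw [← Nat.add_sub_cancel' hmn, poch_add] at h
  exact left_ne_zero_of_mul h

lemma poch_ne_zero_of_forall_ne_neg {a : ℝ} (h : ∀ k : ℕ, a ≠ -k) (m : ℕ) : poch a m ≠ 0 :=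
  prod_ne_zero_iff.mpr fun i _ => by
    have := h i
    contrapose! this
    linarith

lemma smeval_descPochhammer {R : Type*} [CommRing R] (a : R) (k : ℕ) :
    (descPochhammer ℤ k).smeval a = ∏ i ∈ range k, (a - i) := by
  rw [← Polynomial.aeval_eq_smeval, Polynomial.aeval_def, ← Polynomial.eval_map,
    descPochhammer_map, descPochhammer_eval_eq_prod_range]

lemma poch_eq_smeval_descPochhammer (a : ℝ) (k : ℕ) :
    poch a k = (descPochhammer ℤ k).smeval (a + k - 1) := by
  rw [smeval_descPochhammer, poch, ← prod_range_reflect]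
  refine prod_congr rfl fun i hi => ?_
  rw [Nat.sub_sub, Nat.cast_sub (by simp at hi; omega)]
  push_cast
  ring

lemma smeval_descPochhammer_neg (a : ℝ) (k : ℕ) :
    (descPochhammer ℤ k).smeval (-a) = (-1) ^ k * poch a k := by
  calc (descPochhammer ℤ k).smeval (-a) = ∏ i ∈ range k, ((-1) * (a + i)) := by
        rw [smeval_descPochhammer]
        exact prod_congr rfl fun i _ => by ring
    _ = (-1) ^ k * poch a k := by rw [prod_mul_distrib, prod_const, card_range, poch]

lemma poch_one_sub_sub (a : ℝ) (k : ℕ) : poch (1 - a - k) k = (-1) ^ k * poch a k := by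
  rw [poch_eq_smeval_descPochhammer, show 1 - a - k + k - 1 = -a by ring,
    smeval_descPochhammer_neg]

/-- Chu–Vandermonde for falling factorials, evaluated at `-A` and `B + m - 1`. -/
lemma poch_sub_eq_sum (A B : ℝ) (m : ℕ) :
    poch (B - A) m =
      ∑ j ∈ range (m + 1), (-1) ^ j * (m.choose j : ℝ) * poch A j * poch (B + j) (m - j) := by
  rw [poch_eq_smeval_descPochhammer, show B - A + m - 1 = -A + (B + m - 1) by ring,
    Ring.descPochhammer_smeval_add m (Commute.all _ _),
    Nat.sum_antidiagonal_eq_sum_range_succ_mk]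
  refine sum_congr rfl fun j hj => ?_
  rw [smeval_descPochhammer_neg, poch_eq_smeval_descPochhammer (B + j),
    Nat.cast_sub (by simp at hj; omega)]
  ring_nf

lemma sum_neg_one_pow_choose_poch_div (A B : ℝ) (m : ℕ) (hB : poch B m ≠ 0) :
    ∑ k ∈ range (m + 1), (-1) ^ k * (m.choose k : ℝ) * (poch A (m - k) / poch A m) *
      (poch B m / poch B (m - k)) = poch (B - A) m / ((-1) ^ m * poch A m) := by
  rw [poch_sub_eq_sum A B m, sum_div, ← sum_range_reflect]
  refine sum_congr rfl fun j hj => ?_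
  have hjm : j ≤ m := Nat.lt_succ_iff.mp (mem_range.mp hj)
  have hsplit : poch B m = poch B j * poch (B + j) (m - j) := by
    rw [← poch_add, Nat.add_sub_cancel' hjm]
  have hsign : (-1 : ℝ) ^ (m - j) = (-1) ^ m * (-1) ^ j := by
    rw [pow_sub₀ _ (by norm_num) hjm, ← inv_pow, inv_neg_one]
  rw [Nat.add_sub_cancel, Nat.sub_sub_self hjm, Nat.choose_symm hjm, hsign, hsplit,
    mul_div_cancel_left₀ _ (left_ne_zero_of_mul (hsplit ▸ hB))]
  field_simp
  rw [← pow_mul, pow_mul', neg_one_sq, one_pow, one_mul]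

lemma Gamma_add_nat_eq_poch_mul {a : ℝ} {k : ℕ} (h : poch a k ≠ 0) :
    Gamma (a + k) = poch a k * Gamma a := by
  induction k with
  | zero => simp [poch]
  | succ k ih =>
    rw [poch_succ] at h ⊢
    obtain ⟨hk, hak⟩ := mul_ne_zero_iff.mp h
    rw [Nat.cast_succ, ← add_assoc, Gamma_add_one hak, ih hk]
    ring

lemma poch_div_poch_eq_Gamma {c d : ℝ} {m n : ℕ} (hmn : m ≤ n) (hc : poch (c - n) n ≠ 0)
    (hcm : ∀ k : ℕ, c + m - n ≠ -k) (hd : ∀ k : ℕ, d - m ≠ -k) :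
    poch (d - m) m / poch (c - n) m =
      Gamma c * Gamma d / (poch (c - n) n * Gamma (c + m - n) * Gamma (d - m)) := by
  have hΓc : Gamma c = poch (c - n) n * Gamma (c - n) := by
    simpa using Gamma_add_nat_eq_poch_mul hc
  have hΓcm : Gamma (c + m - n) = poch (c - n) m * Gamma (c - n) := by
    rw [← Gamma_add_nat_eq_poch_mul (poch_ne_zero_of_le hc hmn)]
    ring_nf
  have hΓd : Gamma d = poch (d - m) m * Gamma (d - m) := by
    simpa using Gamma_add_nat_eq_poch_mul (poch_ne_zero_of_forall_ne_neg hd m)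
  have hΓcm0 : Gamma (c + m - n) ≠ 0 := Gamma_ne_zero hcm
  have hΓcn0 : Gamma (c - n) ≠ 0 := right_ne_zero_of_mul (hΓcm ▸ hΓcm0)
  have hΓdm0 : Gamma (d - m) ≠ 0 := Gamma_ne_zero hd
  rw [hΓc, hΓd, hΓcm]
  field_simp

lemma two_mul_add_mul_add {α : ℝ} (hα : α ≠ 0) (a c x : ℝ) :
    (2 * x + a) * α + c = 2 * α * (a / 2 + c / (2 * α) + x) := by
  field_simp
  ring

lemma prod_affine_div_affine {α β : ℝ} (hα : α ≠ 0) (hβ : β ≠ 0) (a b c d : ℝ) (k : ℕ) :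
    ∏ i ∈ range k, ((2 * (i : ℝ) + a) * α + c) / ((2 * (i : ℝ) + b) * β + d) =
      (α / β) ^ k * (poch (a / 2 + c / (2 * α)) k / poch (b / 2 + d / (2 * β)) k) := by
  calc ∏ i ∈ range k, ((2 * (i : ℝ) + a) * α + c) / ((2 * (i : ℝ) + b) * β + d)
      = ∏ i ∈ range k, (α / β * ((a / 2 + c / (2 * α) + i) / (b / 2 + d / (2 * β) + i))) :=
        prod_congr rfl fun i _ => by
          rw [two_mul_add_mul_add hα, two_mul_add_mul_add hβ]
          field_simp
    _ = _ := by rw [prod_mul_distrib, prod_const, card_range, prod_div_distrib, poch, poch]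

lemma poch_ne_zero_of_affine {α : ℝ} (hα : α ≠ 0) {a c : ℝ} {m : ℕ}
    (h : ∀ i : ℕ, i < m → (2 * (i : ℝ) + a) * α + c ≠ 0) :
    poch (a / 2 + c / (2 * α)) m ≠ 0 :=
  prod_ne_zero_iff.mpr fun i hi => by
    have := h i (mem_range.mp hi)
    rw [two_mul_add_mul_add hα] at this
    exact right_ne_zero_of_mul this

lemma natCast_eq_two_mul_div_two_add (n : ℕ) :
    (n : ℝ) = 2 * (n / 2 : ℕ) + ((-1) ^ (n + 1) + 1) / 2 := by
  rcases Nat.even_or_odd n with ⟨l, rfl⟩ | ⟨l, rfl⟩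
  · rw [show (l + l) / 2 = l by omega, Odd.neg_one_pow ⟨l, by ring⟩]
    push_cast
    ring
  · rw [show (2 * l + 1) / 2 = l by omega, Even.neg_one_pow ⟨l + 1, by ring⟩]
    push_cast
    ring

lemma mul_pow_sub_two_mul_of_sq_eq_neg {R : Type*} [CommRing R] {x y : R} (hx : x ^ 2 = -y)
    {k n : ℕ} (hk : 2 * k ≤ n) : y ^ k * x ^ (n - 2 * k) = (-1) ^ k * x ^ n := by
  calc y ^ k * x ^ (n - 2 * k) = (-1 * -y) ^ k * x ^ (n - 2 * k) := by rw [neg_one_mul, neg_neg]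
    _ = (-1) ^ k * (x ^ (n - 2 * k) * (x ^ 2) ^ k) := by rw [mul_pow, hx]; ring
    _ = (-1) ^ k * x ^ n := by rw [← pow_mul, ← pow_add, Nat.sub_add_cancel hk]

/-- The `i`-th numerator factor of `S_n` is `2p (numBase p r n + i)`. -/
noncomputable def numBase (p r : ℝ) (n : ℕ) : ℝ :=
  ((-1) ^ (n + 1) + 2 * (n / 2 : ℕ)) / 2 + r / (2 * p)

/-- The `i`-th denominator factor of `S_n` is `2q (denBase q s n + i)`. -/
noncomputable def denBase (q s : ℝ) (n : ℕ) : ℝ := ((-1) ^ (n + 1) + 2) / 2 + s / (2 * q)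

lemma Sbar_eq_sum {p q : ℝ} (hp : p ≠ 0) (hq : q ≠ 0) (r s : ℝ) (n : ℕ) (x : ℝ) :
    Sbar p q r s n x = ∑ k ∈ range (n / 2 + 1), (n / 2).choose k * (q / p) ^ k *
      (poch (numBase p r n) (n / 2 - k) / poch (numBase p r n) (n / 2)) *
      (poch (denBase q s n) (n / 2) / poch (denBase q s n) (n / 2 - k)) * x ^ (n - 2 * k) := by
  simp only [Sbar, S, numBase, denBase, add_assoc, prod_affine_div_affine hp hq,
    prod_affine_div_affine hq hp]
  rw [mul_sum]
  refine sum_congr rfl fun k hk => ?_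
  have hkm : k ≤ n / 2 := Nat.lt_succ_iff.mp (mem_range.mp hk)
  have hpow : (q / p) ^ (n / 2) * (p / q) ^ (n / 2 - k) = (q / p) ^ k := by
    rw [← Nat.add_sub_cancel' hkm, pow_add, Nat.add_sub_cancel_left, mul_assoc, ← mul_pow,
      div_mul_div_cancel₀' hq, div_self hp, one_pow, mul_one]
  rw [← hpow]
  ring

lemma Sbar_eq_of_sq_eq_neg {p q r s : ℝ} (hp : p ≠ 0) (hq : q ≠ 0) {n : ℕ} {x : ℝ}
    (hx : x ^ 2 = -(q / p)) (hB : poch (denBase q s n) (n / 2) ≠ 0) :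
    Sbar p q r s n x = x ^ n * (poch (denBase q s n - numBase p r n) (n / 2) /
      ((-1) ^ (n / 2) * poch (numBase p r n) (n / 2))) := by
  rw [Sbar_eq_sum hp hq, ← sum_neg_one_pow_choose_poch_div _ _ _ hB, mul_sum]
  refine sum_congr rfl fun k hk => ?_
  have hxk : (q / p) ^ k * x ^ (n - 2 * k) = (-1) ^ k * x ^ n :=
    mul_pow_sub_two_mul_of_sq_eq_neg hx (by simp at hk; omega)
  linear_combination ((n / 2).choose k * (poch (numBase p r n) (n / 2 - k) /
    poch (numBase p r n) (n / 2)) * (poch (denBase q s n) (n / 2) /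
      poch (denBase q s n) (n / 2 - k))) * hxk

theorem Sbar_boundary_value_general (p q r s : ℝ) (hp : p ≠ 0) (hq : q ≠ 0)
    (hqp : q / p < 0) (n : ℕ)
    (hden1 : ∀ i : ℕ, i < n / 2 →
      (2 * (i : ℝ) + (-1 : ℝ) ^ (n + 1) + 2) * q + s ≠ 0)
    (hpoch : poch (3 / 2 - r / (2 * p) - n) n ≠ 0)
    (hΓ3 : ∀ k : ℕ, 3 / 2 - r / (2 * p) + ((n / 2 : ℕ) : ℝ) - n ≠ -(k : ℝ))
    (hΓ4 : ∀ k : ℕ, 1 + s / (2 * q) - r / (2 * p) - ((n / 2 : ℕ) : ℝ) ≠ -(k : ℝ)) :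
    Sbar p q r s n (Real.sqrt (-q / p)) =
      (-q / p) ^ ((n : ℝ) / 2) * Real.Gamma (3 / 2 - r / (2 * p))
          * Real.Gamma (1 + s / (2 * q) - r / (2 * p)) /
        (poch (3 / 2 - r / (2 * p) - n) n
          * Real.Gamma (3 / 2 - r / (2 * p) + ((n / 2 : ℕ) : ℝ) - n)
          * Real.Gamma (1 + s / (2 * q) - r / (2 * p) - ((n / 2 : ℕ) : ℝ))) := by
  have ht : 0 ≤ -q / p := by rw [neg_div]; linarith
  have hx : √(-q / p) ^ 2 = -(q / p) := by rw [sq_sqrt ht, neg_div]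
  have hB : poch (denBase q s n) (n / 2) ≠ 0 :=
    poch_ne_zero_of_affine hq fun i hi => by simpa only [add_assoc] using hden1 i hi
  have hA : poch (3 / 2 - r / (2 * p) - n) (n / 2) =
      (-1) ^ (n / 2) * poch (numBase p r n) (n / 2) := by
    rw [← poch_one_sub_sub, numBase, natCast_eq_two_mul_div_two_add n]
    ring_nf
  have hBA : denBase q s n - numBase p r n = 1 + s / (2 * q) - r / (2 * p) - (n / 2 : ℕ) := by
    simp only [numBase, denBase]
    ring
  rw [Sbar_eq_of_sq_eq_neg hp hq hx hB, hBA, ← hA,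
    poch_div_poch_eq_Gamma (Nat.div_le_self n 2) hpoch hΓ3 hΓ4, sqrt_eq_rpow, ← rpow_natCast,
    ← rpow_mul ht]
  ring_nf

/-- Value of the monic polynomial `S̄_n(p,q,r,s;·)` at the boundary point `x = √(−q/p)`. -/
theorem Sbar_boundary_value (p q r s : ℝ) (hp : p ≠ 0) (hq : q ≠ 0)
    (hqp : q / p < 0) (n : ℕ)
    (hden1 : ∀ i : ℕ, i < n / 2 →
      (2 * (i : ℝ) + (-1 : ℝ) ^ (n + 1) + 2) * q + s ≠ 0)
    (hden2 : ∀ i : ℕ, i < n / 2 →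
      (2 * (i : ℝ) + (-1 : ℝ) ^ (n + 1) + 2 * ((n / 2 : ℕ) : ℝ)) * p + r ≠ 0)
    (hpoch : poch (3 / 2 - r / (2 * p) - n) n ≠ 0)
    (hΓ1 : ∀ k : ℕ, 3 / 2 - r / (2 * p) ≠ -(k : ℝ))
    (hΓ2 : ∀ k : ℕ, 1 + s / (2 * q) - r / (2 * p) ≠ -(k : ℝ))
    (hΓ3 : ∀ k : ℕ, 3 / 2 - r / (2 * p) + ((n / 2 : ℕ) : ℝ) - n ≠ -(k : ℝ))
    (hΓ4 : ∀ k : ℕ, 1 + s / (2 * q) - r / (2 * p) - ((n / 2 : ℕ) : ℝ) ≠ -(k : ℝ)) :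
    Sbar p q r s n (Real.sqrt (-q / p)) =
      (-q / p) ^ ((n : ℝ) / 2) * Real.Gamma (3 / 2 - r / (2 * p))
          * Real.Gamma (1 + s / (2 * q) - r / (2 * p)) /
        (poch (3 / 2 - r / (2 * p) - n) n
          * Real.Gamma (3 / 2 - r / (2 * p) + ((n / 2 : ℕ) : ℝ) - n)
          * Real.Gamma (1 + s / (2 * q) - r / (2 * p) - ((n / 2 : ℕ) : ℝ))) :=
  Sbar_boundary_value_general p q r s hp hq hqp n hden1 hpoch hΓ3 hΓ4
end

section
/- Let a be a real number with a > −1/2, and let n, m be natural numbers. Then, with the generalized Hermite initial vector (p,q,r,s) = (0, 1, −2, 2a), ∫_{−∞}^{∞} |x|^{2a} e^{−x²} · S̄_n(0,1,−2,2a;x) · S̄_m(0,1,−2,2a;x) dx = δ_{n,m} · 2^{−n} · (∏_{i=1}^{n} ((1 − (−1)^i)a + i)) · Γ(a + 1/2), where δ_{n,m} is 1 if n = m and 0 otherwise. -/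
/-! With `M = ⌊n/2⌋`, `e = n mod 2` and `c = a + 1/2 + e`, the monic polynomial is the rescaled
Laguerre polynomial `S̄_n(x) = Γ(c+M) ∑_l (-1)^(M-l) C(M,l) x^(2l+e) / Γ(c+l)`, while the moments
of the weight are `∫ |x|^(2a) e^(-x²) x^k = Γ((2a+k+1)/2)` for even `k` and `0` for odd `k`.
Hence for `j = 2J + e ≤ n` the moment `∫ |x|^(2a) e^(-x²) x^j S̄_n` equals `Γ(c+M)` times
`∑_l (-1)^(M-l) C(M,l) (c+l)(c+l+1)⋯(c+l+J-1)`, the `M`-th forward difference of a monic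
polynomial of degree `J`: it vanishes for `J < M` and is `M!` for `J = M`. Expanding the factor of
lower degree of `S̄_n S̄_m` into monomials gives orthogonality and the norm `M! Γ(c+M)`, which an
induction on `n` turns into the stated product. -/

open Finset Real MeasureTheory

open Polynomial Set

theorem sum_neg_one_pow_mul_choose_mul_prod_range_add {R : Type*} [CommRing R] [Nontrivial R]
    (c : R) {J M : ℕ} (hJM : J ≤ M) :
    ∑ l ∈ range (M + 1), (-1) ^ (M - l) * (M.choose l : R) * ∏ i ∈ range J, (c + l + i) =
      if J = M then (M.factorial : R) else 0 := by
  set P : R[X] := ∏ i ∈ range J, (X + C (c + i))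
  have hmonic : ∀ i ∈ range J, (X + C (c + i)).Monic := fun i _ => monic_X_add_C _
  have hdeg : P.natDegree = J := by
    rw [natDegree_prod_of_monic _ _ hmonic]
    simp only [natDegree_X_add_C, sum_const, card_range, smul_eq_mul, mul_one]
  have hsum : (fwdDiff 1)^[M] P.eval 0 = ∑ l ∈ range (M + 1),
      (-1) ^ (M - l) * (M.choose l : R) * ∏ i ∈ range J, (c + l + i) := by
    rw [fwdDiff_iter_eq_sum_shift]
    refine sum_congr rfl fun l _ => ?_
    simp [P, eval_prod, zsmul_eq_mul, add_assoc, add_left_comm]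
  rw [← hsum]
  split_ifs with h
  · subst h
    rw [← hdeg, fwdDiff_iter_degree_eq_factorial, (monic_prod_of_monic _ _ hmonic).leadingCoeff]
    simp
  · rw [fwdDiff_iter_eq_zero_of_degree_lt (by omega)]
    rfl

theorem Real.Gamma_add_nat_eq_prod_mul {z : ℝ} (hz : ∀ k : ℕ, z ≠ -k) (n : ℕ) :
    Gamma (z + n) = (∏ i ∈ range n, (z + i)) * Gamma z := by
  induction n with
  | zero => simp
  | succ n ih =>
    have : z + n ≠ 0 := fun h => hz n (eq_neg_of_add_eq_zero_left h)
    rw [Nat.cast_succ, ← add_assoc, Gamma_add_one this, ih, prod_range_succ]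
    ring

theorem integrable_comp_abs_of_integrableOn_Ioi {E : Type*} [NormedAddCommGroup E] {f : ℝ → E}
    (hf : IntegrableOn f (Ioi 0)) : Integrable fun x : ℝ => f |x| := by
  have hIoi : IntegrableOn (fun x : ℝ => f |x|) (Ioi 0) :=
    hf.congr_fun (fun x hx => by rw [abs_of_pos hx]) measurableSet_Ioi
  have hIic : IntegrableOn (fun x : ℝ => f |x|) (Iic 0) := by
    have hneg : MeasurableEmbedding fun x : ℝ => -x := (Homeomorph.neg ℝ).measurableEmbedding
    rw [← Measure.map_neg_eq_self (volume : Measure ℝ), hneg.integrableOn_map_iff]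
    simpa [Function.comp_def, neg_Iic] using Iff.mpr integrableOn_Ici_iff_integrableOn_Ioi hIoi
  rw [← integrableOn_univ, ← Iic_union_Ioi (a := (0 : ℝ)), integrableOn_union]
  exact ⟨hIic, hIoi⟩

theorem integrable_abs_rpow_mul_exp_neg_sq_mul_pow {s : ℝ} (hs : -1 < s) (j : ℕ) :
    Integrable fun x : ℝ => |x| ^ s * exp (-x ^ 2) * x ^ j := by
  have hdom : Integrable fun x : ℝ => |x| ^ (s + j) * exp (-x ^ 2) := by
    have hsj : -1 < s + j := by linarith [j.cast_nonneg (α := ℝ)]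
    refine (integrable_comp_abs_of_integrableOn_Ioi
      (integrableOn_rpow_mul_exp_neg_mul_sq one_pos hsj)).congr ?_
    filter_upwards with x
    simp
  refine hdom.mono' (by fun_prop) ?_
  filter_upwards [Measure.ae_ne volume 0] with x hx
  rw [norm_mul, norm_mul, Real.norm_of_nonneg (by positivity), Real.norm_of_nonneg (by positivity),
    norm_pow, Real.norm_eq_abs, Real.rpow_add_natCast (abs_ne_zero.2 hx)]
  exact (mul_right_comm _ _ _).le

theorem integral_abs_rpow_mul_exp_neg_sq_mul_pow {s : ℝ} (hs : -1 < s) (j : ℕ) :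
    ∫ x : ℝ, |x| ^ s * exp (-x ^ 2) * x ^ j = if Even j then Gamma ((s + j + 1) / 2) else 0 := by
  split_ifs with hj
  · have hIoi : ∫ x in Ioi (0 : ℝ), x ^ s * exp (-x ^ 2) * x ^ j
        = ∫ x in Ioi (0 : ℝ), x ^ (s + j) * exp (-x ^ (2 : ℝ)) := by
      refine setIntegral_congr_fun measurableSet_Ioi fun x (hx : 0 < x) => ?_
      rw [Real.rpow_add_natCast hx.ne', Real.rpow_two]
      ring
    have habs : (fun x : ℝ => |x| ^ s * exp (-x ^ 2) * x ^ j)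
        = fun x => |x| ^ s * exp (-|x| ^ 2) * |x| ^ j := by
      funext x
      rw [sq_abs, hj.pow_abs]
    rw [habs, integral_comp_abs (f := fun t => t ^ s * exp (-t ^ 2) * t ^ j), hIoi,
      integral_rpow_mul_exp_neg_rpow two_pos (by linarith [j.cast_nonneg (α := ℝ)])]
    ring
  · have hodd := integral_neg_eq_self (fun x : ℝ => |x| ^ s * exp (-x ^ 2) * x ^ j) volume
    simp only [abs_neg, neg_sq, (Nat.not_even_iff_odd.1 hj).neg_pow, mul_neg, integral_neg] at hodd
    linarith

noncomputable def ghpShift (a : ℝ) (n : ℕ) : ℝ := a + 1 / 2 + (n % 2 : ℕ)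

noncomputable def ghpCoeff (a : ℝ) (n l : ℕ) : ℝ :=
  (-1) ^ (n / 2 - l) * ((n / 2).choose l : ℝ) *
    (Gamma (ghpShift a n + (n / 2 : ℕ)) / Gamma (ghpShift a n + l))

section GeneralizedHermite

variable {a : ℝ}

theorem ghpShift_pos (ha : -(1 / 2 : ℝ) < a) (n : ℕ) : 0 < ghpShift a n := by
  unfold ghpShift
  linarith [(n % 2 : ℕ).cast_nonneg (α := ℝ)]

theorem two_mul_ghpShift (a : ℝ) (n : ℕ) : 2 * ghpShift a n = 2 * a + 2 + (-1) ^ (n + 1) := by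
  unfold ghpShift
  rcases Nat.even_or_odd n with hn | hn
  · rw [Nat.even_iff.1 hn, hn.add_one.neg_one_pow]
    norm_num
    ring
  · rw [Nat.odd_iff.1 hn, hn.add_one.neg_one_pow]
    norm_num
    ring

theorem prod_range_ghpShift_add (ha : -(1 / 2 : ℝ) < a) (n t : ℕ) :
    ∏ i ∈ range t, (ghpShift a n + i) = Gamma (ghpShift a n + t) / Gamma (ghpShift a n) := by
  have hc := ghpShift_pos ha n
  rw [Real.Gamma_add_nat_eq_prod_mul (fun k => by linarith [k.cast_nonneg (α := ℝ)]),
    mul_div_cancel_right₀ _ (Real.Gamma_pos_of_pos hc).ne']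

theorem Sbar_ghp_eq_sum (ha : -(1 / 2 : ℝ) < a) (n : ℕ) (x : ℝ) :
    Sbar 0 1 (-2) (2 * a) n x = ∑ l ∈ range (n / 2 + 1), ghpCoeff a n l * x ^ (2 * l + n % 2) := by
  set c := ghpShift a n with hc_def
  have hc : 0 < c := ghpShift_pos ha n
  have hden : ∀ i : ℕ, (2 * (i : ℝ) + (-1) ^ (n + 1) + 2) * 1 + 2 * a = 2 * (c + i) := fun i => by
    linear_combination -(two_mul_ghpShift a n : 2 * c = _)
  have hci : ∀ i : ℕ, c + i ≠ 0 := fun i => by positivity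
  have hlead : ∏ i ∈ range (n / 2), ((2 * (i : ℝ) + (-1) ^ (n + 1) + 2) * 1 + 2 * a) /
      ((2 * (i : ℝ) + (-1) ^ (n + 1) + 2 * ((n / 2 : ℕ) : ℝ)) * 0 + -2) =
      (-1) ^ (n / 2) * (Gamma (c + (n / 2 : ℕ)) / Gamma c) := by
    calc _ = ∏ i ∈ range (n / 2), (-1) * (c + i) := prod_congr rfl fun i _ => by rw [hden]; ring
      _ = _ := by rw [prod_mul_distrib, prod_const, card_range, prod_range_ghpShift_add ha]
  have htail : ∀ l : ℕ, ∏ i ∈ range l, ((2 * (i : ℝ) + (-1) ^ (n + 1) + 2 * ((n / 2 : ℕ) : ℝ)) * 0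
      + -2) / ((2 * (i : ℝ) + (-1) ^ (n + 1) + 2) * 1 + 2 * a) =
      (-1) ^ l * (Gamma c / Gamma (c + l)) := fun l => by
    calc _ = ∏ i ∈ range l, (-1) * (c + i)⁻¹ :=
          prod_congr rfl fun i _ => by rw [hden]; field_simp [hci i]; ring
      _ = _ := by rw [prod_mul_distrib, prod_const, card_range, prod_inv_distrib,
          prod_range_ghpShift_add ha, inv_div]
  unfold Sbar S
  rw [mul_sum, ← sum_range_reflect]
  refine sum_congr rfl fun l hl => ?_
  have hl : l ≤ n / 2 := Nat.lt_succ_iff.1 (mem_range.1 hl)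
  rw [Nat.add_sub_cancel, Nat.sub_sub_self hl, htail, hlead, Nat.choose_symm hl,
    show n - 2 * (n / 2 - l) = 2 * l + n % 2 by omega]
  have hsign : ((-1 : ℝ) ^ (n / 2 - l)) * (-1) ^ l = (-1) ^ (n / 2) := by
    rw [← pow_add, Nat.sub_add_cancel hl]
  have hΓ := (Real.Gamma_pos_of_pos hc).ne'
  have hΓl := (Real.Gamma_pos_of_pos (by positivity : 0 < c + l)).ne'
  have hsq : ((-1 : ℝ) ^ l) ^ 2 = 1 := by
    rw [← pow_mul]
    exact Even.neg_one_pow ⟨l, by ring⟩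
  rw [← hsign, ghpCoeff, ← hc_def]
  field_simp
  linear_combination ((n / 2).choose l * x ^ (2 * l + n % 2) : ℝ) * hsq

theorem ghpCoeff_self (ha : -(1 / 2 : ℝ) < a) (n : ℕ) : ghpCoeff a n (n / 2) = 1 := by
  have hcM : 0 < ghpShift a n + (n / 2 : ℕ) := by positivity [ghpShift_pos ha n]
  simp [ghpCoeff, (Real.Gamma_pos_of_pos hcM).ne']

theorem ghpCoeff_mul_Gamma_add (ha : -(1 / 2 : ℝ) < a) (m l J : ℕ) :
    ghpCoeff a m l * Gamma (ghpShift a m + l + J) = Gamma (ghpShift a m + (m / 2 : ℕ)) *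
      ((-1) ^ (m / 2 - l) * ((m / 2).choose l : ℝ) * ∏ i ∈ range J, (ghpShift a m + l + i)) := by
  have hcl : 0 < ghpShift a m + l := by positivity [ghpShift_pos ha m]
  rw [Real.Gamma_add_nat_eq_prod_mul (fun k => by linarith [k.cast_nonneg (α := ℝ)]), ghpCoeff]
  field_simp [(Real.Gamma_pos_of_pos hcl).ne']

theorem weight_mul_pow_mul_Sbar_eq_sum (ha : -(1 / 2 : ℝ) < a) (j m : ℕ) (x : ℝ) :
    |x| ^ (2 * a) * exp (-x ^ 2) * x ^ j * Sbar 0 1 (-2) (2 * a) m x =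
      ∑ l ∈ range (m / 2 + 1),
        ghpCoeff a m l * (|x| ^ (2 * a) * exp (-x ^ 2) * x ^ (j + (2 * l + m % 2))) := by
  rw [Sbar_ghp_eq_sum ha, mul_sum]
  refine sum_congr rfl fun l _ => ?_
  ring

theorem integrable_weight_mul_pow_mul_Sbar (ha : -(1 / 2 : ℝ) < a) (j m : ℕ) :
    Integrable fun x : ℝ => |x| ^ (2 * a) * exp (-x ^ 2) * x ^ j * Sbar 0 1 (-2) (2 * a) m x := by
  simp_rw [weight_mul_pow_mul_Sbar_eq_sum ha]
  exact integrable_finsetSum _ fun l _ =>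
    (integrable_abs_rpow_mul_exp_neg_sq_mul_pow (by linarith) _).const_mul _

theorem integral_weight_mul_pow_mul_Sbar (ha : -(1 / 2 : ℝ) < a) {j m : ℕ} (hjm : j ≤ m) :
    ∫ x : ℝ, |x| ^ (2 * a) * exp (-x ^ 2) * x ^ j * Sbar 0 1 (-2) (2 * a) m x =
      if j = m then ((m / 2).factorial : ℝ) * Gamma (ghpShift a m + (m / 2 : ℕ)) else 0 := by
  set c := ghpShift a m with hc_def
  simp_rw [weight_mul_pow_mul_Sbar_eq_sum ha]
  rw [integral_finsetSum _ fun l _ =>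
    (integrable_abs_rpow_mul_exp_neg_sq_mul_pow (by linarith) _).const_mul _]
  simp_rw [integral_const_mul, integral_abs_rpow_mul_exp_neg_sq_mul_pow (by linarith : -1 < 2 * a)]
  by_cases hpar : j % 2 = m % 2
  · obtain ⟨J, rfl⟩ : ∃ J, j = 2 * J + m % 2 := ⟨j / 2, by omega⟩
    have hterm : ∀ l ∈ range (m / 2 + 1), ghpCoeff a m l *
        (if Even (2 * J + m % 2 + (2 * l + m % 2)) then
          Gamma ((2 * a + ((2 * J + m % 2 + (2 * l + m % 2) : ℕ) : ℝ) + 1) / 2) else 0) =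
        Gamma (c + (m / 2 : ℕ)) *
          ((-1) ^ (m / 2 - l) * ((m / 2).choose l : ℝ) * ∏ i ∈ range J, (c + l + i)) := by
      intro l _
      have hmoment : (2 * a + ((2 * J + m % 2 + (2 * l + m % 2) : ℕ) : ℝ) + 1) / 2 = c + l + J := by
        rw [hc_def, ghpShift]
        push_cast
        ring
      rw [if_pos ⟨J + l + m % 2, by omega⟩, hmoment, ghpCoeff_mul_Gamma_add ha]
    rw [sum_congr rfl hterm, ← mul_sum, sum_neg_one_pow_mul_choose_mul_prod_range_add c (by omega)]
    by_cases hJ : J = m / 2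
    · rw [if_pos hJ, if_pos (by omega)]
      ring
    · rw [if_neg hJ, if_neg (by omega), mul_zero]
  · rw [if_neg (by omega)]
    refine sum_eq_zero fun l _ => ?_
    rw [if_neg (by rw [Nat.even_iff]; omega), mul_zero]

theorem integral_weight_mul_Sbar_mul_Sbar_of_le (ha : -(1 / 2 : ℝ) < a) {n m : ℕ} (hnm : n ≤ m) :
    ∫ x : ℝ, |x| ^ (2 * a) * exp (-x ^ 2) * Sbar 0 1 (-2) (2 * a) n x * Sbar 0 1 (-2) (2 * a) m x =
      if n = m then ((n / 2).factorial : ℝ) * Gamma (ghpShift a n + (n / 2 : ℕ)) else 0 := by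
  have hexpand : ∀ x : ℝ,
      |x| ^ (2 * a) * exp (-x ^ 2) * Sbar 0 1 (-2) (2 * a) n x * Sbar 0 1 (-2) (2 * a) m x =
        ∑ l ∈ range (n / 2 + 1), ghpCoeff a n l *
          (|x| ^ (2 * a) * exp (-x ^ 2) * x ^ (2 * l + n % 2) * Sbar 0 1 (-2) (2 * a) m x) := by
    intro x
    rw [Sbar_ghp_eq_sum ha n, mul_sum, sum_mul]
    exact sum_congr rfl fun l _ => by ring
  simp_rw [hexpand]
  rw [integral_finsetSum _ fun l _ => (integrable_weight_mul_pow_mul_Sbar ha _ m).const_mul _]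
  simp_rw [integral_const_mul]
  rw [sum_eq_single_of_mem (n / 2) (self_mem_range_succ _) fun l hl hne => by
      have := mem_range.1 hl
      rw [integral_weight_mul_pow_mul_Sbar ha (by omega), if_neg (by omega), mul_zero],
    Nat.div_add_mod, integral_weight_mul_pow_mul_Sbar ha hnm, ghpCoeff_self ha, one_mul]
  split_ifs with h
  · rw [h]
  · rfl

theorem integral_weight_mul_Sbar_mul_Sbar (ha : -(1 / 2 : ℝ) < a) (n m : ℕ) :
    ∫ x : ℝ, |x| ^ (2 * a) * exp (-x ^ 2) * Sbar 0 1 (-2) (2 * a) n x * Sbar 0 1 (-2) (2 * a) m x =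
      if n = m then ((n / 2).factorial : ℝ) * Gamma (ghpShift a n + (n / 2 : ℕ)) else 0 := by
  wlog hnm : n ≤ m generalizing n m
  · simp_rw [mul_right_comm _ (Sbar 0 1 (-2) (2 * a) n _)]
    rw [this m n (by omega)]
    split_ifs with h h' h' <;> first | rfl | omega
  exact integral_weight_mul_Sbar_mul_Sbar_of_le ha hnm

theorem ghpShift_add_div_two (a : ℝ) (n : ℕ) :
    ghpShift a n + (n / 2 : ℕ) = a + 1 / 2 + ((n + 1) / 2 : ℕ) := by
  rw [ghpShift, show (n + 1) / 2 = n % 2 + n / 2 by omega, Nat.cast_add]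
  ring

theorem factorial_mul_Gamma_eq_prod (ha : -(1 / 2 : ℝ) < a) (n : ℕ) :
    ((n / 2).factorial : ℝ) * Gamma (a + 1 / 2 + ((n + 1) / 2 : ℕ)) =
      (2 : ℝ) ^ (-(n : ℤ)) * (∏ i ∈ range n, ((1 - (-1 : ℝ) ^ (i + 1)) * a + ((i : ℝ) + 1))) *
        Gamma (a + 1 / 2) := by
  induction n with
  | zero => simp
  | succ n ih =>
    have hstep : (((n + 1) / 2).factorial : ℝ) * Gamma (a + 1 / 2 + ((n + 1 + 1) / 2 : ℕ)) =
        ((1 - (-1 : ℝ) ^ (n + 1)) * a + (n + 1)) / 2 *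
          ((n / 2).factorial * Gamma (a + 1 / 2 + ((n + 1) / 2 : ℕ))) := by
      rcases Nat.even_or_odd' n with ⟨k, rfl | rfl⟩
      · have hk : 0 < a + 1 / 2 + k := by linarith [k.cast_nonneg (α := ℝ)]
        rw [show (2 * k + 1) / 2 = k by omega, show (2 * k + 1 + 1) / 2 = k + 1 by omega,
          show 2 * k / 2 = k by omega, Nat.cast_succ, ← add_assoc, Real.Gamma_add_one hk.ne',
          Odd.neg_one_pow ⟨k, rfl⟩]
        push_cast
        ring
      · rw [show (2 * k + 1 + 1) / 2 = k + 1 by omega,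
          show (2 * k + 1 + 1 + 1) / 2 = k + 1 by omega, show (2 * k + 1) / 2 = k by omega, Nat.factorial_succ, Even.neg_one_pow ⟨k + 1, by ring⟩]
        push_cast
        ring
    rw [hstep, ih, prod_range_succ, Nat.cast_succ, neg_add, zpow_add₀ two_ne_zero]
    ring

end GeneralizedHermite

/-- Orthogonality relation of the monic generalized Hermite polynomials
`S̄_n(0,1,−2,2a;·)` with respect to the weight `|x|^{2a}e^{−x²}` on `(−∞,∞)`. -/
theorem GHP_orthogonality (a : ℝ) (ha : -(1 / 2 : ℝ) < a) (n m : ℕ) :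
    ∫ x : ℝ,
        |x| ^ (2 * a) * Real.exp (-x ^ 2) *
          Sbar 0 1 (-2) (2 * a) n x * Sbar 0 1 (-2) (2 * a) m x =
      (if n = m then (1 : ℝ) else 0) * (2 : ℝ) ^ (-(n : ℤ)) *
        (∏ i ∈ Finset.range n, ((1 - (-1 : ℝ) ^ (i + 1)) * a + ((i : ℝ) + 1))) *
        Real.Gamma (a + 1 / 2) := by
  rw [integral_weight_mul_Sbar_mul_Sbar ha, ghpShift_add_div_two, factorial_mul_Gamma_eq_prod ha]
  split_ifs <;> ring
end

section
/- Let a be a real number and let n, m be natural numbers with n + m < 2a − 1 (in particular a > 1/2). Assume 2a − j ≠ 0 for every odd integer j with 1 ≤ |j| ≤ 2·max(n,m) + 1. Then, with the initial vector (p,q,r,s) = (1, 0, −2a+2, 2), ∫_{−∞}^{∞} |x|^{−2a} e^{−1/x²} · S̄_n(1,0,−2a+2,2;x) · S̄_m(1,0,−2a+2,2;x) dx = δ_{n,m} · (−1)^n · (∏_{i=1}^{n} [ (−2(−1)^i(i − a) − 2a) / ((2i − 2a + 1)(2i − 2a − 1)) ]) · Γ(a − 1/2), where the integrand is extended by 0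 at x = 0 and δ_{n,m} is 1 if n = m and 0 otherwise. In particular, the finite family {S̄_n(1,0,−2a+2,2;·)}_{n=0}^{N} with N ≤ a − 1/2 is orthogonal with respect to the weight |x|^{−2a}e^{−1/x²} on (−∞,∞). -/
open Finset Real MeasureTheory

/-!
For `(p, q, r, s) = (1, 0, 2 - 2a, 2)` the monic polynomial `S̄_m` has the explicit expansion
`S̄_m(x) = ∑_l C(⌊m/2⌋, l) x^(m - 2l) / (m - a - 1/2)^{(l)}` with falling factorials in the
denominators. The substitution `y = x⁻²` gives the moments `∫ w x^(2u) = Γ(a - 1/2 - u)`, while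
the odd moments vanish. Hence for `j = m - 2t` the integral `∫ w x^j S̄_m` is `Γ(a - 1/2 - m + t)`
times a terminating `₂F₁` at `1`, which Chu–Vandermonde evaluates to a multiple of the falling
factorial `(⌊m/2⌋ - t)^{(⌊m/2⌋)}`. This vanishes for `t ≥ 1`, so `S̄_m` is orthogonal to every lower
monomial; for `n = m` only the leading monomial of `S̄_n` survives, and the resulting closed form
of the squared norm matches the product formula by induction on `n`.
-/

open Polynomial

section Pochhammer

variable {R : Type*} [CommRing R]

theorem descPochhammer_eval_add (r s : R) (M : ℕ) :
    (descPochhammer R M).eval (r + s) = ∑ l ∈ range (M + 1),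
      (M.choose l : R) * ((descPochhammer R l).eval r * (descPochhammer R (M - l)).eval s) := by
  have h (k : ℕ) (t : R) : (descPochhammer R k).eval t = (descPochhammer ℤ k).smeval t := by
    rw [← descPochhammer_map (Int.castRingHom R), eval_map, ← aeval_eq_smeval, aeval_def]
    rfl
  simp only [h, Ring.descPochhammer_smeval_add M (Commute.all r s),
    Nat.sum_antidiagonal_eq_sum_range_succ_mk]

theorem descPochhammer_eval_reflect (r : R) (k : ℕ) :
    (descPochhammer R k).eval (k - 1 - r) = (-1) ^ k * (descPochhammer R k).eval r := by
  rw [descPochhammer_eval_eq_ascPochhammer, ← ascPochhammer_eval_neg_eq_descPochhammer]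
  ring_nf

theorem descPochhammer_eval_eq_mul_sub (y : R) {l M : ℕ} (h : l ≤ M) :
    (descPochhammer R M).eval y =
      (descPochhammer R l).eval y * (descPochhammer R (M - l)).eval (y - l) := by
  obtain ⟨d, rfl⟩ := Nat.exists_eq_add_of_le h
  rw [← descPochhammer_mul, eval_mul, eval_comp, Nat.add_sub_cancel_left]
  simp

theorem sum_choose_mul_ascPochhammer_mul_descPochhammer (c y : R) (M : ℕ) :
    ∑ l ∈ range (M + 1), (M.choose l : R) * ((ascPochhammer R l).eval c *
      (descPochhammer R (M - l)).eval (y - l)) =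
      (-1) ^ M * (descPochhammer R M).eval (M - 1 - y - c) := by
  rw [show (M : R) - 1 - y - c = -c + (M - 1 - y) by ring, descPochhammer_eval_add, mul_sum]
  refine sum_congr rfl fun l hl => ?_
  obtain ⟨d, rfl⟩ := Nat.exists_eq_add_of_le (Nat.lt_succ_iff.mp (mem_range.mp hl))
  have hreflect := descPochhammer_eval_reflect (y - l) d
  rw [show (d : R) - 1 - (y - l) = (l + d : ℕ) - 1 - y by push_cast; ring] at hreflect
  rw [← neg_neg c, ascPochhammer_eval_neg_eq_descPochhammer, neg_neg, Nat.add_sub_cancel_left,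
    hreflect, pow_add]
  ring_nf
  simp

end Pochhammer

theorem ascPochhammer_eval_eq_prod_range {R : Type*} [CommSemiring R] (n : ℕ) (r : R) :
    (ascPochhammer R n).eval r = ∏ j ∈ range n, (r + j) := by
  induction n with
  | zero => simp
  | succ n ih => rw [ascPochhammer_succ_eval, ih, prod_range_succ]

theorem ascPochhammer_succ_eval_left {R : Type*} [CommSemiring R] (n : ℕ) (c : R) :
    (ascPochhammer R (n + 1)).eval c = c * (ascPochhammer R n).eval (c + 1) := by
  rw [ascPochhammer_succ_left, eval_mul, eval_X, eval_comp]
  simp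

theorem sum_choose_mul_ascPochhammer_div_descPochhammer {K : Type*} [Field K] (c y : K) (M : ℕ)
    (hy : (descPochhammer K M).eval y ≠ 0) :
    ∑ l ∈ range (M + 1), (M.choose l : K) * (ascPochhammer K l).eval c /
        (descPochhammer K l).eval y =
      (-1) ^ M * (descPochhammer K M).eval (M - 1 - y - c) / (descPochhammer K M).eval y := by
  rw [eq_div_iff hy, sum_mul, ← sum_choose_mul_ascPochhammer_mul_descPochhammer]
  refine sum_congr rfl fun l hl => ?_
  rw [descPochhammer_eval_eq_mul_sub y (Nat.lt_succ_iff.mp (mem_range.mp hl))] at hy ⊢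
  field_simp [left_ne_zero_of_mul hy]

theorem Real.Gamma_add_nat_eq_ascPochhammer_mul {c : ℝ} (hc : 0 < c) (n : ℕ) :
    Gamma (c + n) = (ascPochhammer ℝ n).eval c * Gamma c := by
  induction n with
  | zero => simp
  | succ n ih =>
    rw [Nat.cast_succ, ← add_assoc, Gamma_add_one (by positivity), ih, ascPochhammer_succ_eval]
    ring

theorem neg_one_pow_succ_eq_two_mul_sub_one (n : ℕ) :
    (-1 : ℝ) ^ (n + 1) = 2 * ((n : ℝ) - 2 * (n / 2 : ℕ)) - 1 := by
  rcases Nat.even_or_odd' n with ⟨t, rfl | rfl⟩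
  · rw [Nat.mul_div_cancel_left t two_pos, pow_succ, pow_mul]
    push_cast
    ring
  · rw [show (2 * t + 1) / 2 = t by omega, pow_succ, pow_succ, pow_mul]
    push_cast
    ring

theorem rpow_mul_exp_neg_inv_sq_eq_comp_rpow (s : ℝ) {x : ℝ} (hx : 0 < x) :
    x ^ (-2 * s - 1) * exp (-1 / x ^ 2) =
      (|(-2 : ℝ)| * x ^ ((-2 : ℝ) - 1)) •
        (exp (-x ^ (-2 : ℝ)) * (x ^ (-2 : ℝ)) ^ (s - 1) / 2) := by
  have hinv : x ^ (-2 : ℝ) = (x ^ 2)⁻¹ := by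
    rw [rpow_neg hx.le, show (2 : ℝ) = (2 : ℕ) by norm_num, rpow_natCast]
  rw [smul_eq_mul, ← rpow_mul hx.le, hinv, neg_div, one_div,
    show -2 * s - 1 = (-2 - 1) + -2 * (s - 1) by ring, rpow_add hx]
  norm_num
  ring

theorem integrableOn_Ioi_rpow_mul_exp_neg_inv_sq {s : ℝ} (hs : 0 < s) :
    IntegrableOn (fun x : ℝ => x ^ (-2 * s - 1) * exp (-1 / x ^ 2)) (Set.Ioi 0) :=
  ((integrableOn_Ioi_comp_rpow_iff _ (by norm_num : (-2 : ℝ) ≠ 0)).mpr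
    ((GammaIntegral_convergent hs).div_const 2)).congr_fun
    (fun _ hx => (rpow_mul_exp_neg_inv_sq_eq_comp_rpow s hx).symm) measurableSet_Ioi

theorem integral_Ioi_rpow_mul_exp_neg_inv_sq {s : ℝ} (hs : 0 < s) :
    ∫ x in Set.Ioi 0, x ^ (-2 * s - 1) * exp (-1 / x ^ 2) = Gamma s / 2 := by
  rw [setIntegral_congr_fun measurableSet_Ioi
      (fun _ hx => rpow_mul_exp_neg_inv_sq_eq_comp_rpow s hx),
    integral_comp_rpow_Ioi (fun y => exp (-y) * y ^ (s - 1) / 2) (by norm_num),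
    integral_div, Gamma_eq_integral hs]

theorem integrable_of_integrableOn_Ioi_of_comp_neg {f : ℝ → ℝ} (hf : IntegrableOn f (Set.Ioi 0))
    (c : ℝ) (hneg : ∀ x, f (-x) = c * f x) : Integrable f := by
  have hIci : IntegrableOn f (Set.Ici 0) := (integrableOn_Ici_iff_integrableOn_Ioi).mpr hf
  have hIic : IntegrableOn f (Set.Iic 0) := by
    have hneg_emb : MeasurableEmbedding fun x : ℝ => -x :=
      (Homeomorph.neg ℝ).measurableEmbedding
    rw [← Measure.map_neg_eq_self (volume : Measure ℝ), hneg_emb.integrableOn_map_iff,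
      Set.neg_preimage, Set.neg_Iic, neg_zero]
    exact IntegrableOn.congr_fun (hIci.const_mul c) (fun x _ => (hneg x).symm) measurableSet_Ici
  rw [← integrableOn_univ, ← Set.Iic_union_Ioi (a := (0 : ℝ))]
  exact hIic.union hf

namespace FourthSubclass

noncomputable def weight (a x : ℝ) : ℝ :=
  if x = 0 then 0 else |x| ^ (-2 * a) * Real.exp (-1 / x ^ 2)

theorem weight_neg (a x : ℝ) : weight a (-x) = weight a x := by
  simp [weight]

theorem weight_mul_pow_of_pos (a : ℝ) {x : ℝ} (hx : 0 < x) (p : ℕ) :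
    weight a x * x ^ p = x ^ ((p : ℝ) - 2 * a) * exp (-1 / x ^ 2) := by
  rw [weight, if_neg hx.ne', abs_of_pos hx, sub_eq_neg_add, ← neg_mul, rpow_add hx,
    rpow_natCast]
  ring

theorem integrable_weight_mul_pow (a : ℝ) {p : ℕ} (hp : (p : ℝ) < 2 * a - 1) :
    Integrable (fun x => weight a x * x ^ p) := by
  refine integrable_of_integrableOn_Ioi_of_comp_neg ?_ ((-1) ^ p) fun x => ?_
  · refine (integrableOn_Ioi_rpow_mul_exp_neg_inv_sq (s := a - 1 / 2 - p / 2)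
      (by linarith)).congr_fun (fun x hx => ?_) measurableSet_Ioi
    rw [weight_mul_pow_of_pos a hx]
    ring_nf
  · rw [weight_neg, neg_pow]
    ring

theorem integral_weight_mul_pow_of_odd (a : ℝ) {p : ℕ} (hp : Odd p) :
    ∫ x, weight a x * x ^ p = 0 := by
  have hodd (x : ℝ) : weight a (-x) * (-x) ^ p = -(weight a x * x ^ p) := by
    rw [weight_neg, hp.neg_pow, mul_neg]
  have h := integral_neg_eq_self (fun x => weight a x * x ^ p) volume
  simp only [hodd, integral_neg] at h
  linarith

theorem integral_weight_mul_pow_two_mul (a : ℝ) {u : ℕ} (hu : (u : ℝ) < a - 1 / 2) :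
    ∫ x, weight a x * x ^ (2 * u) = Gamma (a - 1 / 2 - u) := by
  have habs (x : ℝ) : weight a x * x ^ (2 * u) = weight a |x| * |x| ^ (2 * u) := by
    rw [pow_mul, pow_mul, sq_abs]
    rcases abs_choice x with h | h <;> rw [h]
    rw [weight_neg]
  have hGamma := integral_Ioi_rpow_mul_exp_neg_inv_sq (s := a - 1 / 2 - u) (by linarith)
  rw [show -2 * (a - 1 / 2 - u) - 1 = ((2 * u : ℕ) : ℝ) - 2 * a by push_cast; ring] at hGamma
  rw [integral_congr_ae (ae_of_all _ habs),
    integral_comp_abs (f := fun x => weight a x * x ^ (2 * u)),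
    setIntegral_congr_fun measurableSet_Ioi (fun x hx => weight_mul_pow_of_pos a hx (2 * u)),
    hGamma]
  ring

variable {a : ℝ}

-- Up to a power of `2`, `(descPochhammer ℝ (n / 2)).eval (n - a - 1 / 2)` is the product of the
-- denominators in the normalisation of `S̄_n`; where it vanishes, `Sbar` takes junk values.
theorem Sbar_eq_sum {n : ℕ} (hn : (descPochhammer ℝ (n / 2)).eval (n - a - 1 / 2) ≠ 0)
    (x : ℝ) :
    Sbar 1 0 (-2 * a + 2) 2 n x = ∑ k ∈ range (n / 2 + 1),
      (n / 2).choose k / (descPochhammer ℝ k).eval (n - a - 1 / 2) * x ^ (n - 2 * k) := by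
  have hfac (i : ℕ) : ((2 * (i : ℝ) + (-1) ^ (n + 1) + 2 * (n / 2 : ℕ)) * 1 + (-2 * a + 2)) /
      ((2 * i + (-1) ^ (n + 1) + 2) * 0 + 2) = (n - a - 1 / 2 - (n / 2 : ℕ) + 1) + i := by
    rw [neg_one_pow_succ_eq_two_mul_sub_one]
    ring
  have hfac_inv (i : ℕ) : ((2 * (i : ℝ) + (-1) ^ (n + 1) + 2) * 0 + 2) /
      ((2 * i + (-1) ^ (n + 1) + 2 * (n / 2 : ℕ)) * 1 + (-2 * a + 2)) =
      ((n - a - 1 / 2 - (n / 2 : ℕ) + 1) + i)⁻¹ := by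
    rw [← inv_div, hfac]
  simp only [Sbar, S, hfac, hfac_inv, prod_inv_distrib, ← ascPochhammer_eval_eq_prod_range,
    ← descPochhammer_eval_eq_ascPochhammer, mul_sum]
  refine sum_congr rfl fun k hk => ?_
  have hkN : k ≤ n / 2 := Nat.lt_succ_iff.mp (mem_range.mp hk)
  have hshift : (ascPochhammer ℝ (n / 2 - k)).eval (n - a - 1 / 2 - (n / 2 : ℕ) + 1) =
      (descPochhammer ℝ (n / 2 - k)).eval (n - a - 1 / 2 - k) := by
    rw [descPochhammer_eval_eq_ascPochhammer, Nat.cast_sub hkN]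
    ring_nf
  rw [descPochhammer_eval_eq_mul_sub _ hkN] at hn ⊢
  rw [hshift]
  generalize (descPochhammer ℝ k).eval ((n : ℝ) - a - 1 / 2) = A at hn ⊢
  generalize (descPochhammer ℝ (n / 2 - k)).eval ((n : ℝ) - a - 1 / 2 - k) = B at hn ⊢
  field_simp [right_ne_zero_of_mul hn]

theorem weight_mul_pow_mul_Sbar_eq_sum {m : ℕ}
    (hm : (descPochhammer ℝ (m / 2)).eval (m - a - 1 / 2) ≠ 0) (j : ℕ) (x : ℝ) :
    weight a x * x ^ j * Sbar 1 0 (-2 * a + 2) 2 m x = ∑ l ∈ range (m / 2 + 1),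
      (m / 2).choose l / (descPochhammer ℝ l).eval (m - a - 1 / 2) *
        (weight a x * x ^ (j + (m - 2 * l))) := by
  rw [Sbar_eq_sum hm, mul_sum]
  refine sum_congr rfl fun l _ => ?_
  rw [pow_add]
  ring

theorem integrable_weight_mul_pow_add_sub {j m : ℕ} (hjm : (j : ℝ) + m < 2 * a - 1) (l : ℕ) :
    Integrable (fun x => weight a x * x ^ (j + (m - 2 * l))) :=
  integrable_weight_mul_pow a (lt_of_le_of_lt (by norm_cast; omega) hjm)

theorem integrable_weight_mul_pow_mul_Sbar {j m : ℕ} (hjm : (j : ℝ) + m < 2 * a - 1)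
    (hm : (descPochhammer ℝ (m / 2)).eval (m - a - 1 / 2) ≠ 0) :
    Integrable (fun x => weight a x * x ^ j * Sbar 1 0 (-2 * a + 2) 2 m x) := by
  simp_rw [weight_mul_pow_mul_Sbar_eq_sum hm]
  exact integrable_finsetSum _ fun l _ => (integrable_weight_mul_pow_add_sub hjm l).const_mul _

theorem integral_weight_mul_pow_mul_Sbar {j m : ℕ} (hjm : (j : ℝ) + m < 2 * a - 1)
    (hm : (descPochhammer ℝ (m / 2)).eval (m - a - 1 / 2) ≠ 0) :
    ∫ x, weight a x * x ^ j * Sbar 1 0 (-2 * a + 2) 2 m x = ∑ l ∈ range (m / 2 + 1),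
      (m / 2).choose l / (descPochhammer ℝ l).eval (m - a - 1 / 2) *
        ∫ x, weight a x * x ^ (j + (m - 2 * l)) := by
  simp_rw [weight_mul_pow_mul_Sbar_eq_sum hm]
  rw [integral_finsetSum _ fun l _ => (integrable_weight_mul_pow_add_sub hjm l).const_mul _]
  simp_rw [integral_const_mul]

theorem integral_weight_mul_pow_mul_Sbar_of_odd {j m : ℕ} (hodd : Odd (j + m))
    (hjm : (j : ℝ) + m < 2 * a - 1)
    (hm : (descPochhammer ℝ (m / 2)).eval (m - a - 1 / 2) ≠ 0) :
    ∫ x, weight a x * x ^ j * Sbar 1 0 (-2 * a + 2) 2 m x = 0 := by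
  rw [integral_weight_mul_pow_mul_Sbar hjm hm]
  refine sum_eq_zero fun l hl => ?_
  obtain ⟨t, ht⟩ := hodd
  have hl : l ≤ m / 2 := Nat.lt_succ_iff.mp (mem_range.mp hl)
  rw [integral_weight_mul_pow_of_odd a ⟨t - l, by omega⟩, mul_zero]

theorem integral_weight_mul_pow_mul_Sbar_of_add_two_mul_eq {j m t : ℕ} (hjt : j + 2 * t = m)
    (hjm : (j : ℝ) + m < 2 * a - 1)
    (hm : (descPochhammer ℝ (m / 2)).eval (m - a - 1 / 2) ≠ 0) :
    ∫ x, weight a x * x ^ j * Sbar 1 0 (-2 * a + 2) 2 m x =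
      Gamma (a - 1 / 2 - m + t) * ((-1) ^ (m / 2) *
        (descPochhammer ℝ (m / 2)).eval ((m / 2 : ℕ) - t : ℝ) /
          (descPochhammer ℝ (m / 2)).eval (m - a - 1 / 2)) := by
  have hc : 0 < a - 1 / 2 - m + t := by
    have : (j : ℝ) + 2 * t = m := by exact_mod_cast hjt
    linarith
  have hmoment : ∀ l ∈ range (m / 2 + 1), ∫ x, weight a x * x ^ (j + (m - 2 * l)) =
      (ascPochhammer ℝ l).eval (a - 1 / 2 - m + t) * Gamma (a - 1 / 2 - m + t) := by
    intro l hl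
    have hl : l ≤ m / 2 := Nat.lt_succ_iff.mp (mem_range.mp hl)
    have hcast : ((m - t - l : ℕ) : ℝ) = m - t - l := by
      rw [Nat.cast_sub (by omega), Nat.cast_sub (by omega)]
    rw [show j + (m - 2 * l) = 2 * (m - t - l) by omega,
      integral_weight_mul_pow_two_mul a (by rw [hcast]; linarith [(l.cast_nonneg : (0 : ℝ) ≤ l)]),
      ← Gamma_add_nat_eq_ascPochhammer_mul hc, hcast]
    ring_nf
  have hvandermonde := sum_choose_mul_ascPochhammer_div_descPochhammer
    (a - 1 / 2 - m + t) (m - a - 1 / 2) (m / 2) hm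
  rw [show ((m / 2 : ℕ) : ℝ) - 1 - (m - a - 1 / 2) - (a - 1 / 2 - m + t) = (m / 2 : ℕ) - t by
    ring] at hvandermonde
  rw [integral_weight_mul_pow_mul_Sbar hjm hm, sum_congr rfl fun l hl => by rw [hmoment l hl],
    mul_comm, ← hvandermonde, sum_mul]
  exact sum_congr rfl fun l _ => by ring

theorem integral_weight_mul_pow_mul_Sbar_of_lt {j m : ℕ} (hj : j < m)
    (hjm : (j : ℝ) + m < 2 * a - 1)
    (hm : (descPochhammer ℝ (m / 2)).eval (m - a - 1 / 2) ≠ 0) :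
    ∫ x, weight a x * x ^ j * Sbar 1 0 (-2 * a + 2) 2 m x = 0 := by
  rcases Nat.even_or_odd (j + m) with ⟨s, hs⟩ | hodd
  · rw [integral_weight_mul_pow_mul_Sbar_of_add_two_mul_eq (t := s - j) (by omega) hjm hm,
      ← Nat.cast_sub (by omega), descPochhammer_eval_coe_nat_of_lt (by omega)]
    simp
  · exact integral_weight_mul_pow_mul_Sbar_of_odd hodd hjm hm

noncomputable def normSq (a : ℝ) (n : ℕ) : ℝ :=
  (n / 2).factorial * Gamma (a - 1 / 2 - n) / (ascPochhammer ℝ (n / 2)).eval (a + 1 / 2 - n)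

noncomputable def normRatio (a : ℝ) (i : ℕ) : ℝ :=
  (-2 * (-1 : ℝ) ^ (i + 1) * (((i : ℝ) + 1) - a) - 2 * a) /
    ((2 * ((i : ℝ) + 1) - 2 * a + 1) * (2 * ((i : ℝ) + 1) - 2 * a - 1))

theorem integral_weight_mul_pow_self_mul_Sbar {m : ℕ} (hm2 : 2 * (m : ℝ) < 2 * a - 1)
    (hm : (descPochhammer ℝ (m / 2)).eval (m - a - 1 / 2) ≠ 0) :
    ∫ x, weight a x * x ^ m * Sbar 1 0 (-2 * a + 2) 2 m x = normSq a m := by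
  have hreflect := ascPochhammer_eval_neg_eq_descPochhammer ℝ (m - a - 1 / 2 : ℝ) (m / 2)
  rw [show -(m - a - 1 / 2 : ℝ) = a + 1 / 2 - m by ring] at hreflect
  rw [integral_weight_mul_pow_mul_Sbar_of_add_two_mul_eq (j := m) (m := m) (t := 0) rfl
      (by linarith) hm,
    Nat.cast_zero, sub_zero, add_zero, descPochhammer_eval_eq_descFactorial,
    Nat.descFactorial_self, normSq, hreflect]
  field_simp
  ring_nf
  simp

theorem integral_weight_mul_Sbar_mul_Sbar {n m : ℕ} (hnm : (n : ℝ) + m < 2 * a - 1)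
    (hn : (descPochhammer ℝ (n / 2)).eval (n - a - 1 / 2) ≠ 0)
    (hm : (descPochhammer ℝ (m / 2)).eval (m - a - 1 / 2) ≠ 0) :
    ∫ x, weight a x * Sbar 1 0 (-2 * a + 2) 2 n x * Sbar 1 0 (-2 * a + 2) 2 m x =
      ∑ k ∈ range (n / 2 + 1), (n / 2).choose k / (descPochhammer ℝ k).eval (n - a - 1 / 2) *
        ∫ x, weight a x * x ^ (n - 2 * k) * Sbar 1 0 (-2 * a + 2) 2 m x := by
  have hexpand (x : ℝ) :
      weight a x * Sbar 1 0 (-2 * a + 2) 2 n x * Sbar 1 0 (-2 * a + 2) 2 m x =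
        ∑ k ∈ range (n / 2 + 1), (n / 2).choose k / (descPochhammer ℝ k).eval (n - a - 1 / 2) *
          (weight a x * x ^ (n - 2 * k) * Sbar 1 0 (-2 * a + 2) 2 m x) := by
    rw [Sbar_eq_sum hn, mul_sum, sum_mul]
    exact sum_congr rfl fun k _ => by ring
  simp_rw [hexpand]
  rw [integral_finsetSum _ fun k _ => (integrable_weight_mul_pow_mul_Sbar
    (lt_of_le_of_lt (by norm_cast; omega) hnm) hm).const_mul _]
  simp_rw [integral_const_mul]

theorem integral_weight_mul_Sbar_mul_Sbar_of_lt {n m : ℕ} (hlt : n < m)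
    (hnm : (n : ℝ) + m < 2 * a - 1)
    (hn : (descPochhammer ℝ (n / 2)).eval (n - a - 1 / 2) ≠ 0)
    (hm : (descPochhammer ℝ (m / 2)).eval (m - a - 1 / 2) ≠ 0) :
    ∫ x, weight a x * Sbar 1 0 (-2 * a + 2) 2 n x * Sbar 1 0 (-2 * a + 2) 2 m x = 0 := by
  rw [integral_weight_mul_Sbar_mul_Sbar hnm hn hm]
  refine sum_eq_zero fun k _ => ?_
  rw [integral_weight_mul_pow_mul_Sbar_of_lt (by omega)
    (lt_of_le_of_lt (by norm_cast; omega) hnm) hm, mul_zero]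

theorem integral_weight_mul_Sbar_mul_self {n : ℕ} (hn2 : 2 * (n : ℝ) < 2 * a - 1)
    (hn : (descPochhammer ℝ (n / 2)).eval (n - a - 1 / 2) ≠ 0) :
    ∫ x, weight a x * Sbar 1 0 (-2 * a + 2) 2 n x * Sbar 1 0 (-2 * a + 2) 2 n x =
      normSq a n := by
  have hnn : (n : ℝ) + n < 2 * a - 1 := by linarith
  rw [integral_weight_mul_Sbar_mul_Sbar hnn hn hn, sum_range_succ',
    sum_eq_zero fun k hk => by
      rw [integral_weight_mul_pow_mul_Sbar_of_lt (by have := mem_range.mp hk; omega)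
        (lt_of_le_of_lt (by norm_cast; omega) hnn) hn, mul_zero]]
  simp only [zero_add, Nat.choose_zero_right, Nat.cast_one, descPochhammer_zero, eval_one,
    div_one, one_mul, mul_zero, Nat.sub_zero]
  exact integral_weight_mul_pow_self_mul_Sbar hn2 hn

theorem normSq_two_mul_add_one {M : ℕ} (hM : 2 * (M : ℝ) + 1 < a - 1 / 2) :
    normSq a (2 * M + 1) = -normRatio a (2 * M) * normSq a (2 * M) := by
  have hpoch := ascPochhammer_succ_eval_left M (a + 1 / 2 - (2 * M + 1))
  rw [ascPochhammer_succ_eval, show a + 1 / 2 - (2 * M + 1) + 1 = a + 1 / 2 - 2 * M by ring]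
    at hpoch
  have hP : 0 < (ascPochhammer ℝ M).eval (a + 1 / 2 - (2 * M + 1)) :=
    ascPochhammer_pos _ _ (by linarith)
  have hQ : 0 < (ascPochhammer ℝ M).eval (a + 1 / 2 - 2 * M) :=
    ascPochhammer_pos _ _ (by linarith)
  have hGamma : Gamma (a - 1 / 2 - 2 * M) = (a - 1 / 2 - (2 * M + 1)) *
      Gamma (a - 1 / 2 - (2 * M + 1)) := by
    rw [← Gamma_add_one (by linarith)]
    ring_nf
  have hsign : (-1 : ℝ) ^ (2 * M + 1) = -1 := by rw [pow_succ, pow_mul]; norm_num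
  simp only [normSq, normRatio, show (2 * M + 1) / 2 = M by omega,
    Nat.mul_div_cancel_left M two_pos, hsign]
  push_cast
  rw [hGamma]
  generalize Gamma _ = G
  generalize (ascPochhammer ℝ M).eval (a + 1 / 2 - (2 * M + 1)) = P at *
  generalize (ascPochhammer ℝ M).eval (a + 1 / 2 - 2 * M) = Q at *
  have hd1 : 2 * (2 * (M : ℝ) + 1 - a) + 1 ≠ 0 := by linarith
  have hd2 : 2 * (2 * (M : ℝ) + 1 - a) - 1 ≠ 0 := by linarith
  field_simp
  linear_combination (-2 * G * (2 * a - 1 - 2 * (2 * M + 1))) * hpoch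

theorem normSq_two_mul_add_two {M : ℕ} (hM : 2 * (M : ℝ) + 2 < a - 1 / 2) :
    normSq a (2 * M + 2) = -normRatio a (2 * M + 1) * normSq a (2 * M + 1) := by
  have hpoch := ascPochhammer_succ_eval_left M (a + 1 / 2 - (2 * M + 2))
  rw [show a + 1 / 2 - (2 * M + 2) + 1 = a + 1 / 2 - (2 * M + 1) by ring] at hpoch
  have hQ : 0 < (ascPochhammer ℝ M).eval (a + 1 / 2 - (2 * M + 1)) :=
    ascPochhammer_pos _ _ (by linarith)
  have hGamma : Gamma (a - 1 / 2 - (2 * M + 1)) = (a - 1 / 2 - (2 * M + 2)) *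
      Gamma (a - 1 / 2 - (2 * M + 2)) := by
    rw [← Gamma_add_one (by linarith)]
    ring_nf
  have hsign : (-1 : ℝ) ^ (2 * M + 1 + 1) = 1 := by rw [pow_succ, pow_succ, pow_mul]; norm_num
  simp only [normSq, normRatio, show (2 * M + 2) / 2 = M + 1 by omega,
    show (2 * M + 1) / 2 = M by omega, Nat.factorial_succ, hsign]
  push_cast
  rw [hGamma, hpoch]
  generalize Gamma _ = G
  generalize (ascPochhammer ℝ M).eval (a + 1 / 2 - (2 * M + 1)) = Q at *
  obtain ⟨u, rfl⟩ : ∃ u, a = u + 2 * M + 5 / 2 := ⟨a - 2 * M - 5 / 2, by ring⟩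
  have hu : 0 < u := by linarith
  ring_nf
  field_simp
  ring

theorem normSq_succ {n : ℕ} (hn : (n : ℝ) + 1 < a - 1 / 2) :
    normSq a (n + 1) = -normRatio a n * normSq a n := by
  rcases Nat.even_or_odd' n with ⟨M, rfl | rfl⟩ <;> push_cast at hn
  · exact normSq_two_mul_add_one (by linarith)
  · exact normSq_two_mul_add_two (by linarith)

theorem normSq_eq_prod {n : ℕ} (hn : (n : ℝ) < a - 1 / 2) :
    normSq a n = (-1) ^ n * (∏ i ∈ range n, normRatio a i) * Gamma (a - 1 / 2) := by
  induction n with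
  | zero => simp [normSq]
  | succ n ih =>
    push_cast at hn
    rw [normSq_succ hn, ih (by linarith), prod_range_succ, pow_succ]
    ring

theorem descPochhammer_half_eval_ne_zero {k : ℕ} {K : ℤ} (hk : k ≤ K)
    (hden : ∀ j : ℤ, Odd j → 1 ≤ |j| → |j| ≤ 2 * K + 1 → 2 * a - (j : ℝ) ≠ 0) :
    (descPochhammer ℝ (k / 2)).eval (k - a - 1 / 2) ≠ 0 := by
  rw [descPochhammer_eval_eq_prod_range, prod_ne_zero_iff]
  intro i hi hzero
  have hi : i < k / 2 := mem_range.mp hi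
  refine hden (2 * (k - i) - 1) ⟨k - i - 1, by ring⟩ ?_ ?_ ?_
  · rw [abs_of_pos (by omega)]; omega
  · rw [abs_of_pos (by omega)]; omega
  · push_cast
    linarith

end FourthSubclass

/-- Finite orthogonality of the fourth subclass `S̄_n(1,0,−2a+2,2;·)` with respect to
the weight `|x|^{−2a}e^{−1/x²}` on `(−∞,∞)` (extended by `0` at `x = 0`), valid when
`n + m < 2a − 1`. -/
theorem finite_orthogonality_fourth_subclass (a : ℝ) (n m : ℕ)
    (hnm : (n : ℝ) + (m : ℝ) < 2 * a - 1)
    (hden : ∀ j : ℤ, Odd j → 1 ≤ |j| → |j| ≤ 2 * (max n m : ℤ) + 1 →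
      2 * a - (j : ℝ) ≠ 0) :
    ∫ x : ℝ,
        (if x = 0 then 0 else |x| ^ (-2 * a) * Real.exp (-1 / x ^ 2)) *
          Sbar 1 0 (-2 * a + 2) 2 n x * Sbar 1 0 (-2 * a + 2) 2 m x =
      (if n = m then (1 : ℝ) else 0) * (-1 : ℝ) ^ n *
        (∏ i ∈ Finset.range n,
          (-2 * (-1 : ℝ) ^ (i + 1) * (((i : ℝ) + 1) - a) - 2 * a) /
            ((2 * ((i : ℝ) + 1) - 2 * a + 1) * (2 * ((i : ℝ) + 1) - 2 * a - 1))) *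
        Real.Gamma (a - 1 / 2) := by
  wlog hle : n ≤ m generalizing n m
  · have hswap := this m n (by linarith) (by rwa [max_comm]) (by omega)
    rw [if_neg (by omega)] at hswap ⊢
    rw [← integral_congr_ae (ae_of_all _ fun x => mul_right_comm _ _ _), hswap]
    ring
  have hnondeg {k : ℕ} (hk : k ≤ m) :=
    FourthSubclass.descPochhammer_half_eval_ne_zero (le_max_of_le_right (by exact_mod_cast hk)) hden
  change ∫ x, FourthSubclass.weight a x * _ * _ = _
  rcases hle.lt_or_eq with hlt | rfl
  · rw [FourthSubclass.integral_weight_mul_Sbar_mul_Sbar_of_lt hlt hnm (hnondeg hle)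
      (hnondeg le_rfl), if_neg hlt.ne]
    ring
  · rw [FourthSubclass.integral_weight_mul_Sbar_mul_self (by linarith) (hnondeg le_rfl),
      FourthSubclass.normSq_eq_prod (by linarith), if_pos rfl]
    simp only [FourthSubclass.normRatio]
    ring
end

section
/- For every natural number m and every real θ with cos θ ≠ 0, S_{2m}(−1, 1, −3, 2; cos θ) = (−1)^m · cos((2m+1)θ) / ((2m+1) · cos θ). -/
/-!
Multiplying by `(2m+1)x` turns `S_{2m}(-1,1,-3,2;x)` into the odd polynomial
`∑ⱼ cⱼ x^(2j+1)` with `cⱼ = (2m+1)(-4)^j C(m+j,2j)/(2j+1)`, which is the classical expansion of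
`(-1)^m T_{2m+1}(x)`. The expansion is proved by induction on `m`: Pascal's rule gives the
coefficients the three-term recurrence of `T_{n+4} = (4x² - 2) T_{n+2} - T_n`. Evaluating at
`x = cos θ` gives `T_{2m+1}(cos θ) = cos ((2m+1)θ)`.
-/

open Finset Real MeasureTheory

open scoped Nat

theorem Nat.choose_add_two_add_two_add_choose (n k : ℕ) :
    (n + 2).choose (k + 2) + n.choose (k + 2) = 2 * (n + 1).choose (k + 2) + n.choose k := by
  simp only [Nat.choose_succ_succ]
  ring

/-- The coefficient of `X^(2j+1)` in `(-1)^m T_{2m+1}`, i.e. `(2m+1)(-4)^j C(m+j,2j)/(2j+1)`,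
written without division. -/
def chebyshevOddCoeff (m j : ℕ) : ℤ :=
  (-4) ^ j * ((m + 1 + j).choose (2 * j + 1) + (m + j).choose (2 * j + 1) : ℕ)

theorem chebyshevOddCoeff_eq_zero_of_lt {m j : ℕ} (h : m < j) : chebyshevOddCoeff m j = 0 := by
  simp [chebyshevOddCoeff, Nat.choose_eq_zero_of_lt (by omega : m + 1 + j < 2 * j + 1),
    Nat.choose_eq_zero_of_lt (by omega : m + j < 2 * j + 1)]

theorem chebyshevOddCoeff_zero_right (m : ℕ) : chebyshevOddCoeff m 0 = 2 * m + 1 := by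
  simp only [chebyshevOddCoeff, pow_zero, one_mul, mul_zero, zero_add, Nat.choose_one_right]
  push_cast
  ring

theorem chebyshevOddCoeff_add_two_add_one (m j : ℕ) :
    chebyshevOddCoeff (m + 2) (j + 1) =
      2 * chebyshevOddCoeff (m + 1) (j + 1) - 4 * chebyshevOddCoeff (m + 1) j
        - chebyshevOddCoeff m (j + 1) := by
  have h₁ := Nat.choose_add_two_add_two_add_choose (m + j + 1) (2 * j + 1)
  have h₂ := Nat.choose_add_two_add_two_add_choose (m + j + 2) (2 * j + 1)
  zify at h₁ h₂
  simp only [chebyshevOddCoeff]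
  push_cast
  ring_nf at h₁ h₂ ⊢
  linear_combination (-4 * (-4) ^ j) * (h₁ + h₂)

theorem chebyshevOddCoeff_mul_two_mul_add_one {m j : ℕ} (h : j ≤ m) :
    chebyshevOddCoeff m j * (2 * j + 1) = (-4) ^ j * (2 * m + 1) * (m + j).choose (2 * j) := by
  have hpascal : (m + 1 + j).choose (2 * j + 1) =
      (m + j).choose (2 * j) + (m + j).choose (2 * j + 1) := by
    rw [show m + 1 + j = m + j + 1 by ring, Nat.choose_succ_succ]
  have hratio := Nat.choose_succ_right_eq (m + j) (2 * j)
  rw [show m + j - 2 * j = m - j by omega] at hratio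
  zify [h] at hratio
  simp only [chebyshevOddCoeff, hpascal]
  push_cast
  linear_combination (2 * (-4) ^ j) * hratio

namespace Polynomial.Chebyshev

variable (R : Type*) [CommRing R]

theorem T_add_four (n : ℤ) : T R (n + 4) = (4 * X ^ 2 - 2) * T R (n + 2) - T R n := by
  have h₂ := T_add_two R (n + 2)
  have h₁ := T_add_two R (n + 1)
  have h₀ := T_add_two R n
  rw [show n + 2 + 2 = n + 4 by ring, show n + 2 + 1 = n + 3 by ring] at h₂
  rw [show n + 1 + 2 = n + 3 by ring, show n + 1 + 1 = n + 2 by ring] at h₁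
  linear_combination h₂ + 2 * X * h₁ + h₀

noncomputable def signedTOdd (m : ℕ) : R[X] :=
  ∑ j ∈ range (m + 1), (chebyshevOddCoeff m j : R[X]) * X ^ (2 * j + 1)

theorem signedTOdd_eq_sum_range {m N : ℕ} (h : m < N) :
    signedTOdd R m = ∑ j ∈ range N, (chebyshevOddCoeff m j : R[X]) * X ^ (2 * j + 1) :=
  (eventually_constant_sum (fun j hj => by simp [chebyshevOddCoeff_eq_zero_of_lt hj]) h).symm

theorem signedTOdd_add_two (m : ℕ) :
    signedTOdd R (m + 2) = (2 - 4 * X ^ 2) * signedTOdd R (m + 1) - signedTOdd R m := by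
  have h₂ := signedTOdd_eq_sum_range R (by omega : m + 2 < m + 3)
  have h₁ := signedTOdd_eq_sum_range R (by omega : m + 1 < m + 3)
  have h₀ := signedTOdd_eq_sum_range R (by omega : m < m + 3)
  have hX : X ^ 2 * signedTOdd R (m + 1) =
      ∑ j ∈ range (m + 2), (chebyshevOddCoeff (m + 1) j : R[X]) * X ^ (2 * (j + 1) + 1) := by
    rw [signedTOdd, mul_sum]
    exact sum_congr rfl fun j _ => by ring
  rw [sum_range_succ'] at h₂ h₁ h₀
  rw [show (2 - 4 * X ^ 2) * signedTOdd R (m + 1) - signedTOdd R m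
      = 2 * signedTOdd R (m + 1) - 4 * (X ^ 2 * signedTOdd R (m + 1)) - signedTOdd R m by ring,
    hX, h₂, h₁, h₀]
  simp only [chebyshevOddCoeff_add_two_add_one, chebyshevOddCoeff_zero_right, Int.cast_sub,
    Int.cast_mul, sub_mul, sum_sub_distrib, mul_assoc, ← mul_sum]
  push_cast
  ring

theorem signedTOdd_eq (m : ℕ) : signedTOdd R m = (-1) ^ m * T R (2 * m + 1) := by
  induction m using Nat.twoStepInduction with
  | zero => simp [signedTOdd, chebyshevOddCoeff_zero_right]
  | one =>
    have hT₃ : T R 3 = 4 * X ^ 3 - 3 * X := by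
      rw [show (3 : ℤ) = 1 + 2 by norm_num, T_add_two, show (1 + 1 : ℤ) = 2 by norm_num, T_two,
        T_one]
      ring
    norm_num [signedTOdd, sum_range_succ, chebyshevOddCoeff, hT₃, sub_eq_add_neg, add_comm]
  | more m ih₀ ih₁ =>
    have hidx₂ : (2 * (m + 2 : ℕ) + 1 : ℤ) = 2 * m + 1 + 4 := by push_cast; ring
    have hidx₁ : (2 * m + 1 + 2 : ℤ) = 2 * (m + 1 : ℕ) + 1 := by push_cast; ring
    rw [signedTOdd_add_two, ih₀, ih₁, hidx₂, T_add_four, hidx₁]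
    ring

end Polynomial.Chebyshev

theorem prod_range_neg_div_eq_factorial (m j : ℕ) :
    ∏ i ∈ range j, (-(2 * i + 2 * m + 2) / (2 * i + 3) : ℝ) =
      (-4) ^ j * (m + j)! * j ! / (m ! * (2 * j + 1)!) := by
  induction j with
  | zero => simp [Nat.factorial_ne_zero]
  | succ j ih =>
    rw [prod_range_succ, ih, ← add_assoc, Nat.factorial_succ (m + j), Nat.factorial_succ j,
      show 2 * (j + 1) + 1 = 2 * j + 1 + 1 + 1 by ring, Nat.factorial_succ (2 * j + 1 + 1),
      Nat.factorial_succ (2 * j + 1)]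
    push_cast
    field_simp
    ring

theorem chebyshevOddCoeff_eq_mul_choose_mul_prod {m j : ℕ} (h : j ≤ m) :
    (chebyshevOddCoeff m j : ℝ) =
      (2 * m + 1) * m.choose j * ∏ i ∈ range j, (-(2 * i + 2 * m + 2) / (2 * i + 3) : ℝ) := by
  have hc : (chebyshevOddCoeff m j : ℝ) * (2 * j + 1) =
      (-4) ^ j * (2 * m + 1) * (m + j).choose (2 * j) := by
    exact_mod_cast chebyshevOddCoeff_mul_two_mul_add_one h
  rw [Nat.cast_choose ℝ (by omega : 2 * j ≤ m + j), show m + j - 2 * j = m - j by omega] at hc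
  rw [prod_range_neg_div_eq_factorial, Nat.cast_choose ℝ h, Nat.factorial_succ (2 * j)]
  push_cast
  field_simp at hc ⊢
  linear_combination hc

theorem two_mul_add_one_mul_mul_S_fifthKind (m : ℕ) (x : ℝ) :
    (2 * m + 1) * x * S (-1) 1 (-3) 2 (2 * m) x =
      (Polynomial.Chebyshev.signedTOdd ℝ m).eval x := by
  rw [Polynomial.Chebyshev.signedTOdd, Polynomial.eval_finsetSum, S,
    show 2 * m / 2 = m by omega, show (-1 : ℝ) ^ (2 * m + 1) = -1 by simp [pow_succ],
    ← sum_range_reflect, mul_sum]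
  refine sum_congr rfl fun k hk_mem => ?_
  have hk : k ≤ m := Nat.lt_succ_iff.mp (mem_range.mp hk_mem)
  have hfactor (i : ℕ) : ((2 * i + -1 + 2 * m) * -1 + -3) / ((2 * i + -1 + 2) * 1 + 2) =
      (-(2 * i + 2 * m + 2) / (2 * i + 3) : ℝ) := by ring_nf
  rw [show m + 1 - 1 - k = m - k by omega, show m - (m - k) = k by omega,
    show 2 * m - 2 * (m - k) = 2 * k by omega, Nat.choose_symm hk]
  simp only [hfactor, Polynomial.eval_mul, Polynomial.eval_intCast, Polynomial.eval_pow,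
    Polynomial.eval_X, chebyshevOddCoeff_eq_mul_choose_mul_prod hk]
  ring

/-- Half-trigonometric form of the even-degree Chebyshev polynomials of the fifth kind:
`S_{2m}(−1,1,−3,2;cos θ) = (−1)^m cos((2m+1)θ)/((2m+1)cos θ)`. -/
theorem fifth_kind_chebyshev_trig_form (m : ℕ) (θ : ℝ) (hθ : Real.cos θ ≠ 0) :
    S (-1) 1 (-3) 2 (2 * m) (Real.cos θ) =
      (-1 : ℝ) ^ m * Real.cos ((2 * (m : ℝ) + 1) * θ) / ((2 * (m : ℝ) + 1) * Real.cos θ) := by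
  have hS := two_mul_add_one_mul_mul_S_fifthKind m (cos θ)
  rw [Polynomial.Chebyshev.signedTOdd_eq, Polynomial.eval_mul, Polynomial.eval_pow,
    Polynomial.eval_neg, Polynomial.eval_one, Polynomial.Chebyshev.T_real_cos] at hS
  push_cast at hS
  rw [eq_div_iff (mul_ne_zero (by positivity) hθ)]
  linear_combination hS
end

section
/- For every natural number n ≥ 1 and every real x, the monic Chebyshev polynomial of the fifth kind of degree 2n factors as S̄_{2n}(−1, 1, −3, 2; x) = ∏_{k=1, k≠n+1}^{2n+1} ( x − cos((2k−1)π/(2(2n+1))) ), the product running over k = 1, …, 2n+1 with k = n+1 omitted. -/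
open Finset Real MeasureTheory

/-! With `N = 2n + 1`, the polynomial `4ⁿ x S̄_{2n}(x)` is the Chebyshev polynomial `T_N`.
Both have leading coefficient `4ⁿ` in degree `N` and vanishing even coefficients, and the
Chebyshev equation `(1 - x²) T'' = x T' - N² T` gives `(j + 2)(j + 1) a_{j+2} = (j² - N²) a_j`
for the coefficients of `T_N`, which is exactly the ratio of consecutive coefficients of
`S̄_{2n}`. The roots of `T_N` are `cos ((2k + 1)π / 2N)` for `k < N`; the middle one, `k = n`,
is `cos (π / 2) = 0` and cancels the factor `x`. -/

open Polynomial

theorem Finset.sum_range_two_mul {M : Type*} [AddCommMonoid M] (f : ℕ → M) (m : ℕ) :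
    ∑ j ∈ range (2 * m), f j = ∑ i ∈ range m, (f (2 * i) + f (2 * i + 1)) := by
  induction m with
  | zero => simp
  | succ m ih =>
    rw [mul_add, mul_one, sum_range_succ, sum_range_succ, sum_range_succ, ih, add_assoc]

theorem Polynomial.eval_eq_sum_range_odd {R : Type*} [CommRing R] {p : R[X]} {n : ℕ}
    (hdeg : p.natDegree ≤ 2 * n + 1) (heven : ∀ m, p.coeff (2 * m) = 0) (x : R) :
    p.eval x = ∑ i ∈ range (n + 1), p.coeff (2 * i + 1) * x ^ (2 * i + 1) := by
  rw [eval_eq_sum_range' (n := 2 * (n + 1)) (by omega), sum_range_two_mul]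
  simp only [heven, zero_mul, zero_add]

namespace Polynomial.Chebyshev

section CharZero

variable {R : Type*} [CommRing R] [IsDomain R] [CharZero R]

theorem coeff_T_add_two (N : ℤ) (k : ℕ) :
    ((k : R) + 2) * ((k : R) + 1) * (T R N).coeff (k + 2) =
      ((k : R) ^ 2 - (N : R) ^ 2) * (T R N).coeff k := by
  have h := iterate_derivative_T_eval_zero_recurrence (R := R) N k
  simp only [← coeff_zero_eq_eval_zero, coeff_iterate_derivative, zero_add,
    Nat.descFactorial_self, nsmul_eq_mul, Nat.factorial_succ] at h
  have hfact : (k.factorial : R) ≠ 0 := Nat.cast_ne_zero.mpr (Nat.factorial_ne_zero k)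
  apply mul_left_cancel₀ hfact
  push_cast at h
  linear_combination h

theorem coeff_T_two_mul_add_one_two_mul (n m : ℕ) : (T R (2 * n + 1)).coeff (2 * m) = 0 := by
  induction m with
  | zero =>
    rw [mul_zero, coeff_zero_eq_eval_zero]
    exact T_eval_zero_of_odd R (odd_two_mul_add_one (n : ℤ))
  | succ m ih =>
    have h := coeff_T_add_two (R := R) (2 * n + 1) (2 * m)
    rw [ih, mul_zero] at h
    have h₂ : ((2 * m : ℕ) : R) + 2 ≠ 0 := by exact_mod_cast Nat.succ_ne_zero (2 * m + 1)
    have h₁ : ((2 * m : ℕ) : R) + 1 ≠ 0 := by exact_mod_cast Nat.succ_ne_zero (2 * m)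
    exact (mul_eq_zero.mp h).resolve_left (mul_ne_zero h₂ h₁)

theorem coeff_T_two_mul_add_one_self (n : ℕ) :
    (T R (2 * n + 1)).coeff (2 * n + 1) = 4 ^ n := by
  have h := leadingCoeff_T R (2 * n + 1)
  rw [leadingCoeff, natDegree_T, show (2 * n + 1 : ℤ).natAbs = 2 * n + 1 by omega] at h
  rw [h, Nat.add_sub_cancel, pow_mul]
  norm_num

end CharZero

theorem T_real_eq_C_mul_prod (N : ℕ) :
    T ℝ N = Polynomial.C (2 ^ (N - 1)) *
      ∏ k ∈ range N, (X - Polynomial.C (cos ((2 * k + 1) * π / (2 * N)))) := by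
  have hinj := (range N).nodup_map_iff_injOn.mp (roots_T_real_nodup N)
  have hcard : Multiset.card (T ℝ N).roots = (T ℝ N).natDegree := by
    rw [roots_T_real, natDegree_T, Int.natAbs_natCast, Finset.card_val,
      card_image_of_injOn hinj, card_range]
  rw [← C_leadingCoeff_mul_prod_multiset_X_sub_C hcard, leadingCoeff_T, Int.natAbs_natCast,
    roots_T_real]
  exact congrArg _ (prod_image (f := fun a => X - Polynomial.C a) hinj)

end Polynomial.Chebyshev

open Polynomial.Chebyshev hiding C S

/-- The product `∏_{i<j} ((2i + (-1)^{2n+1} + 2n)p + r) / ((2i + (-1)^{2n+1} + 2)q + s)` occurring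
in `S_{2n}(p,q,r,s;x)`, at `(p,q,r,s) = (-1,1,-3,2)`. -/
noncomputable def fifthKindProd (n j : ℕ) : ℝ :=
  ∏ i ∈ range j, -(2 * (i : ℝ) + 2 * n + 2) / (2 * i + 3)

theorem fifthKindProd_ne_zero (n j : ℕ) : fifthKindProd n j ≠ 0 :=
  prod_ne_zero_iff.mpr fun _ _ => div_ne_zero (neg_ne_zero.mpr (by positivity)) (by positivity)

noncomputable def fifthKindPoly (n : ℕ) : ℝ[X] :=
  ∑ k ∈ range (n + 1),
    C (n.choose k * (fifthKindProd n (n - k) / fifthKindProd n n)) * X ^ (2 * (n - k))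

theorem eval_fifthKindPoly (n : ℕ) (x : ℝ) :
    (fifthKindPoly n).eval x = Sbar (-1) 1 (-3) 2 (2 * n) x := by
  have hsign : (-1 : ℝ) ^ (2 * n + 1) = -1 := by rw [pow_succ, pow_mul]; norm_num
  have hprod (j : ℕ) : ∏ i ∈ range j, ((2 * (i : ℝ) + -1 + 2 * (n : ℝ)) * -1 + -3) /
      ((2 * i + -1 + 2) * 1 + 2) = fifthKindProd n j :=
    prod_congr rfl fun i _ => by ring_nf
  have hprod_inv : ∏ i ∈ range n, ((2 * (i : ℝ) + -1 + 2) * 1 + 2) /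
      ((2 * i + -1 + 2 * (n : ℝ)) * -1 + -3) = (fifthKindProd n n)⁻¹ := by
    rw [fifthKindProd, ← prod_inv_distrib]
    exact prod_congr rfl fun i _ => by rw [inv_div]; ring_nf
  rw [Sbar, S, Nat.mul_div_cancel_left n two_pos, hsign, hprod_inv, fifthKindPoly,
    eval_finsetSum, mul_sum]
  refine sum_congr rfl fun k _ => ?_
  rw [hprod, eval_C_mul, eval_X_pow, Nat.mul_sub]
  ring

theorem coeff_T_two_mul_add_one_eq_fifthKind (n k : ℕ) (hk : k ≤ n) :
    (T ℝ (2 * n + 1)).coeff (2 * (n - k) + 1) =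
      4 ^ n * (n.choose k * (fifthKindProd n (n - k) / fifthKindProd n n)) := by
  induction k with
  | zero =>
    rw [Nat.sub_zero, coeff_T_two_mul_add_one_self, Nat.choose_zero_right,
      div_self (fifthKindProd_ne_zero n n)]
    simp
  | succ k ih =>
    obtain ⟨m, rfl⟩ : ∃ m, n = k + 1 + m := ⟨n - (k + 1), by omega⟩
    specialize ih (by omega)
    rw [show k + 1 + m - k = m + 1 by omega, show 2 * (m + 1) + 1 = 2 * m + 1 + 2 by ring,
      fifthKindProd, prod_range_succ, ← fifthKindProd] at ih
    rw [show k + 1 + m - (k + 1) = m by omega]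
    have hrec := coeff_T_add_two (R := ℝ) (2 * (k + 1 + m : ℕ) + 1) (2 * m + 1)
    have hchoose : ((k + 1 + m).choose (k + 1) : ℝ) * (k + 1) =
        (k + 1 + m).choose k * (m + 1) := by
      exact_mod_cast (Nat.choose_succ_right_eq (k + 1 + m) k).trans (by congr 1; omega)
    have hD :
        ((2 * m + 1 : ℕ) : ℝ) ^ 2 - ((2 * (k + 1 + m : ℕ) + 1 : ℤ) : ℝ) ^ 2 ≠ 0 := by
      push_cast; nlinarith
    apply mul_left_cancel₀ hD
    rw [← hrec, ih]
    have hW := fifthKindProd_ne_zero (k + 1 + m) (k + 1 + m)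
    field_simp
    push_cast
    linear_combination (4 * fifthKindProd (k + 1 + m) m * (2 * m + 3) * (k + 2 * m + 2)) * hchoose

theorem T_two_mul_add_one_eq_C_mul_X_mul_fifthKindPoly (n : ℕ) :
    T ℝ (2 * n + 1) = C (4 ^ n) * X * fifthKindPoly n := by
  refine Polynomial.funext fun x => ?_
  have hdeg : (T ℝ (2 * n + 1)).natDegree ≤ 2 * n + 1 := by
    rw [natDegree_T]; omega
  rw [eval_eq_sum_range_odd hdeg (coeff_T_two_mul_add_one_two_mul n), ← sum_range_reflect,
    eval_mul, eval_mul, eval_C, eval_X, fifthKindPoly, eval_finsetSum, mul_sum]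
  refine sum_congr rfl fun k hk => ?_
  rw [Nat.add_sub_cancel,
    coeff_T_two_mul_add_one_eq_fifthKind n k (Nat.lt_succ_iff.mp (mem_range.mp hk)),
    eval_C_mul, eval_X_pow]
  ring

theorem fifth_kind_chebyshev_factorization_general (n : ℕ) (x : ℝ) :
    Sbar (-1) 1 (-3) 2 (2 * n) x =
      ∏ k ∈ (Finset.Icc 1 (2 * n + 1)).erase (n + 1),
        (x - Real.cos ((2 * (k : ℝ) - 1) * Real.pi / (2 * (2 * (n : ℝ) + 1)))) := by
  have hmid : cos ((2 * (n : ℝ) + 1) * π / (2 * (2 * n + 1))) = 0 := by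
    rw [← cos_pi_div_two]; congr 1; field_simp
  have hP : fifthKindPoly n =
      ∏ k ∈ (range (2 * n + 1)).erase n,
        (X - C (cos ((2 * k + 1) * π / (2 * (2 * n + 1))))) := by
    have hT := T_real_eq_C_mul_prod (2 * n + 1)
    push_cast at hT
    rw [← mul_prod_erase _ _ (mem_range.mpr (by omega : n < 2 * n + 1)), hmid, C_0, sub_zero,
      pow_mul, (by norm_num : (2 : ℝ) ^ 2 = 4), ← mul_assoc,
      T_two_mul_add_one_eq_C_mul_X_mul_fifthKindPoly] at hT
    have h4X : C ((4 : ℝ) ^ n) * X ≠ 0 :=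
      mul_ne_zero (C_ne_zero.mpr (pow_ne_zero _ (by norm_num))) X_ne_zero
    exact mul_left_cancel₀ h4X hT
  rw [← eval_fifthKindPoly, hP, eval_prod]
  refine prod_nbij' (· + 1) (· - 1) (by simp) (by simp; omega) (by simp) (by simp; omega)
    fun k _ => ?_
  rw [eval_sub, eval_X, eval_C]
  push_cast
  ring_nf

/-- Factorization of the monic Chebyshev polynomials of the fifth kind of even degree:
`S̄_{2n}(−1,1,−3,2;x) = ∏_{k=1,k≠n+1}^{2n+1} (x − cos((2k−1)π/(2(2n+1))))`. -/
theorem fifth_kind_chebyshev_factorization (n : ℕ) (hn : 1 ≤ n) (x : ℝ) :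
    Sbar (-1) 1 (-3) 2 (2 * n) x =
      ∏ k ∈ (Finset.Icc 1 (2 * n + 1)).erase (n + 1),
        (x - Real.cos ((2 * (k : ℝ) - 1) * Real.pi / (2 * (2 * (n : ℝ) + 1)))) :=
  fifth_kind_chebyshev_factorization_general n x
end

section
/- For every natural number n and every real x, S̄_n(0, 1, −2, 0; x) = (√2)^{−n} · He_n(√2 · x), where He_n denotes the (probabilists') Hermite polynomial as in Mathlib (Polynomial.hermite n, evaluated over ℝ). Equivalently, the physicists' Hermite polynomial H_n(x) = 2^{n/2} He_n(√2 x) satisfies H_n(x) = 2^n · S̄_n(0, 1, −2, 0; x). -/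
open Finset Real MeasureTheory

open Polynomial
open scoped Nat

/-! For `(p, q, r, s) = (0, 1, -2, 0)` and `n = 2m + b`, the normalising product of `S̄_n`
telescopes against the product in the `k`-th term of `S_n`, leaving the coefficient
`(-1/2)^k · C(m, k) · ∏_{m-k ≤ i < m} (2i + 2b + 1)` of `x^(n-2k)`. The coefficient of
`x^(n-2k)` in `(√2)^(-n) He_n(√2 x)` is `(-1/2)^k · (2k-1)‼ · C(n, 2k)`. The two agree because
the falling factorial `n(n-1)⋯(n-2k+1)` splits into its even factors, `2^k m(m-1)⋯(m-k+1)`, and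
its odd factors, which are exactly the product above, while `(2k)! = 2^k k! (2k-1)‼`. -/

theorem descFactorial_two_mul_add {b : ℕ} (hb : b ≤ 1) (j k : ℕ) :
    (2 * (j + k) + b).descFactorial (2 * k) =
      2 ^ k * (j + k).descFactorial k * ∏ i ∈ Ico j (j + k), (2 * i + 2 * b + 1) := by
  induction k with
  | zero => simp
  | succ k ih =>
    have hparity : (2 * (j + k) + b + 2) * (2 * (j + k) + b + 1) =
        2 * (j + k + 1) * (2 * (j + k) + 2 * b + 1) := by
      interval_cases b <;> ring
    rw [← add_assoc, prod_Ico_succ_top (by omega), mul_add_one 2 k,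
      show 2 * (j + k + 1) + b = 2 * (j + k) + b + 1 + 1 by ring,
      Nat.succ_descFactorial_succ, Nat.succ_descFactorial_succ, Nat.succ_descFactorial_succ, ih]
    linear_combination
      (2 ^ k * (j + k).descFactorial k * ∏ i ∈ Ico j (j + k), (2 * i + 2 * b + 1)) * hparity

theorem choose_mul_prod_Ico_odd {b : ℕ} (hb : b ≤ 1) (j k : ℕ) :
    (j + k).choose k * ∏ i ∈ Ico j (j + k), (2 * i + 2 * b + 1) =
      (2 * k - 1)‼ * (2 * (j + k) + b).choose (2 * k) := by
  have h := descFactorial_two_mul_add hb j k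
  rw [Nat.descFactorial_eq_factorial_mul_choose, Nat.descFactorial_eq_factorial_mul_choose] at h
  have hfact : (2 * k)! = 2 ^ k * k ! * (2 * k - 1)‼ := by
    rcases k with _ | k
    · rfl
    · rw [show 2 * (k + 1) = 2 * k + 1 + 1 by ring, Nat.factorial_eq_mul_doubleFactorial,
        show 2 * k + 1 + 1 = 2 * (k + 1) by ring, Nat.doubleFactorial_two_mul,
        show 2 * (k + 1) - 1 = 2 * k + 1 by omega]
  rw [hfact] at h
  refine Nat.eq_of_mul_eq_mul_left (by positivity : 0 < 2 ^ k * k !) ?_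
  linear_combination h.symm

theorem coeff_hermite_sub_two_mul {n k : ℕ} (hk : 2 * k ≤ n) :
    (hermite n).coeff (n - 2 * k) = (-1) ^ k * (2 * k - 1)‼ * n.choose (2 * k) := by
  rw [coeff_hermite_of_even_add (by rw [Nat.even_add, Nat.even_sub hk]; simp),
    Nat.sub_sub_self hk, Nat.choose_symm hk, Nat.mul_div_cancel_left k two_pos]

theorem aeval_hermite_eq_sum {R : Type*} [CommRing R] (n : ℕ) (y : R) :
    aeval y (hermite n) = ∑ k ∈ range (n / 2 + 1),
      (-1) ^ k * (2 * k - 1)‼ * n.choose (2 * k) * y ^ (n - 2 * k) := by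
  have hinj : Set.InjOn (fun k => n - 2 * k) (range (n / 2 + 1)) := by
    intro a ha b hb hab
    simp only [coe_range, Set.mem_Iio] at ha hb
    simp only at hab
    omega
  have hsub : (range (n / 2 + 1)).image (fun k => n - 2 * k) ⊆ range (n + 1) := by
    intro i
    simp only [mem_image, mem_range]
    omega
  have hodd : ∀ i ∈ range (n + 1), i ∉ (range (n / 2 + 1)).image (fun k => n - 2 * k) →
      (hermite n).coeff i • y ^ i = 0 := by
    intro i hi hi'
    simp only [mem_image, mem_range, not_exists, not_and] at hi hi'
    rw [coeff_hermite_of_odd_add, zero_smul]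
    exact Nat.not_even_iff_odd.mp fun ⟨t, ht⟩ => hi' ((n - i) / 2) (by omega) (by omega)
  rw [aeval_eq_sum_range, natDegree_hermite, ← sum_subset hsub hodd, sum_image hinj]
  refine sum_congr rfl fun k hk => ?_
  rw [coeff_hermite_sub_two_mul (by have := mem_range.mp hk; omega), zsmul_eq_mul]
  push_cast
  ring

theorem prod_range_mul_prod_range_inv {K : Type*} [CommGroupWithZero K] {f : ℕ → K} {j m : ℕ}
    (hjm : j ≤ m) (hf : ∀ i < j, f i ≠ 0) :
    (∏ i ∈ range m, f i) * ∏ i ∈ range j, (f i)⁻¹ = ∏ i ∈ Ico j m, f i := by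
  have hj : ∏ i ∈ range j, f i ≠ 0 := prod_ne_zero_iff.mpr fun i hi => hf i (mem_range.mp hi)
  rw [← prod_range_mul_prod_Ico f hjm, prod_inv_distrib, mul_right_comm, mul_inv_cancel₀ hj,
    one_mul]

theorem neg_one_pow_succ_eq_two_mul_mod_two_sub_one {R : Type*} [Ring R] (n : ℕ) :
    (-1 : R) ^ (n + 1) = 2 * (n % 2 : ℕ) - 1 := by
  rcases Nat.even_or_odd n with h | h
  · rw [h.add_one.neg_one_pow, Nat.even_iff.mp h]
    norm_num
  · rw [h.add_one.neg_one_pow, Nat.odd_iff.mp h]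
    norm_num

theorem Sbar_zero_one_neg_two_zero (n : ℕ) (x : ℝ) :
    Sbar 0 1 (-2) 0 n x = ∑ k ∈ range (n / 2 + 1),
      (-1 / 2 : ℝ) ^ k * (n / 2).choose k *
        (∏ i ∈ Ico (n / 2 - k) (n / 2), (2 * i + 2 * (n % 2) + 1 : ℕ)) * x ^ (n - 2 * k) := by
  have hdenom : ∀ i : ℕ, 2 * (i : ℝ) + (-1) ^ (n + 1) + 2 = (2 * i + 2 * (n % 2) + 1 : ℕ) := by
    intro i
    rw [neg_one_pow_succ_eq_two_mul_mod_two_sub_one]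
    push_cast
    ring
  simp only [Sbar, S, mul_zero, zero_add, mul_one, add_zero, hdenom, mul_sum]
  refine sum_congr rfl fun k hk => ?_
  have hprod := prod_range_mul_prod_range_inv
    (f := fun i => ((2 * i + 2 * (n % 2) + 1 : ℕ) : ℝ) / -2) (Nat.sub_le (n / 2) k)
    fun i _ => by positivity
  simp only [inv_div] at hprod
  rw [show ∀ a b c d : ℝ, a * (b * c * d) = b * (a * c) * d from fun _ _ _ _ => by ring, hprod,
    prod_div_distrib, prod_const, Nat.card_Ico,
    Nat.sub_sub_self (Nat.le_of_lt_succ (mem_range.mp hk)), Nat.cast_prod,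
    div_eq_mul_inv _ ((-2 : ℝ) ^ k), ← inv_pow, show (-2 : ℝ)⁻¹ = -1 / 2 by norm_num]
  ring

theorem sqrt_two_zpow_neg_mul_aeval_hermite (n : ℕ) (x : ℝ) :
    √2 ^ (-(n : ℤ)) * aeval (√2 * x) (hermite n) = ∑ k ∈ range (n / 2 + 1),
      (-1 / 2 : ℝ) ^ k * (2 * k - 1)‼ * n.choose (2 * k) * x ^ (n - 2 * k) := by
  rw [aeval_hermite_eq_sum, mul_sum]
  refine sum_congr rfl fun k hk => ?_
  have h2k : 2 * k ≤ n := by rw [mem_range] at hk; omega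
  have hscale : √2 ^ n = √2 ^ (n - 2 * k) * 2 ^ k :=
    calc √2 ^ n = √2 ^ (n - 2 * k + 2 * k) := by rw [Nat.sub_add_cancel h2k]
      _ = √2 ^ (n - 2 * k) * (√2 ^ 2) ^ k := by rw [pow_add, pow_mul]
      _ = √2 ^ (n - 2 * k) * 2 ^ k := by rw [Real.sq_sqrt zero_le_two]
  rw [zpow_neg, zpow_natCast, hscale, mul_pow, div_eq_mul_inv, mul_pow, inv_pow]
  field_simp

/-- The Hermite polynomials in terms of the basic class:
`S̄_n(0,1,−2,0;x) = (√2)^{−n} · He_n(√2·x)`, where `He_n` is the probabilists'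
Hermite polynomial; equivalently the physicists' Hermite polynomial
`H_n(x) = 2^{n/2}He_n(√2 x)` satisfies `H_n(x) = 2^n · S̄_n(0,1,−2,0;x)`. -/
theorem Sbar_eq_hermite (n : ℕ) (x : ℝ) :
    Sbar 0 1 (-2) 0 n x =
      (Real.sqrt 2) ^ (-(n : ℤ)) *
        Polynomial.aeval (Real.sqrt 2 * x) (Polynomial.hermite n) := by
  rw [Sbar_zero_one_neg_two_zero, sqrt_two_zpow_neg_mul_aeval_hermite]
  refine sum_congr rfl fun k hk => ?_
  have hcoeff := choose_mul_prod_Ico_odd (Nat.le_of_lt_succ (Nat.mod_lt n two_pos)) (n / 2 - k) k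
  rw [Nat.sub_add_cancel (Nat.le_of_lt_succ (mem_range.mp hk)), Nat.div_add_mod] at hcoeff
  rw [mul_assoc ((-1 / 2 : ℝ) ^ k), ← Nat.cast_mul, hcoeff]
  push_cast
  ring
end

section
/- For every real number a with a > 1/2, ∫_{−∞}^{∞} |x|^{−2a} e^{−1/x²} dx = Γ(a − 1/2), where the integrand is extended by 0 at x = 0 and Γ denotes the real Gamma function. -/
open Real MeasureTheory Set

/-!
The substitution `x ↦ x⁻¹` turns `∫₀^∞ x^(-2a) e^(-x⁻²) dx` into `∫₀^∞ u^(2a-2) e^(-u²) du`,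
which the substitution `u = √t` identifies with `Γ(a - 1/2) / 2`; the integrand over `ℝ`
is even, so its integral is twice that.
-/

theorem integral_comp_inv_Ioi {E : Type*} [NormedAddCommGroup E] [NormedSpace ℝ E]
    (g : ℝ → E) : ∫ x in Ioi 0, (x ^ 2)⁻¹ • g x⁻¹ = ∫ y in Ioi 0, g y := by
  rw [← integral_comp_rpow_Ioi g (p := -1) (by norm_num)]
  refine setIntegral_congr_fun measurableSet_Ioi fun x (hx : 0 < x) => ?_
  norm_num [rpow_neg hx.le, rpow_two]

theorem integral_rpow_mul_exp_neg_inv_rpow {p q : ℝ} (hp : 0 < p) (hq : q < -1) :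
    ∫ x in Ioi (0 : ℝ), x ^ q * exp (-x⁻¹ ^ p) = (1 / p) * Gamma ((-q - 1) / p) := by
  calc ∫ x in Ioi (0 : ℝ), x ^ q * exp (-x⁻¹ ^ p)
      = ∫ x in Ioi (0 : ℝ), (x ^ 2)⁻¹ • (x⁻¹ ^ (-q - 2) * exp (-x⁻¹ ^ p)) := by
        refine setIntegral_congr_fun measurableSet_Ioi fun x (hx : 0 < x) => ?_
        have h_pow : (x ^ 2)⁻¹ * x⁻¹ ^ (-q - 2) = x ^ q := by
          rw [← rpow_two, inv_rpow hx.le, ← rpow_neg hx.le, ← rpow_neg hx.le, ← rpow_add hx]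
          ring_nf
        rw [smul_eq_mul, ← mul_assoc, h_pow]
    _ = (1 / p) * Gamma ((-q - 1) / p) := by
        rw [integral_comp_inv_Ioi (fun y => y ^ (-q - 2) * exp (-y ^ p)),
          integral_rpow_mul_exp_neg_rpow hp (by linarith)]
        ring_nf

/-- Normalizing constant of the fourth dual symmetric distribution:
`∫_{−∞}^{∞} |x|^{−2a} e^{−1/x²} dx = Γ(a − 1/2)` for `a > 1/2`
(integrand extended by `0` at `x = 0`). -/
theorem integral_abs_rpow_exp_inv_sq (a : ℝ) (ha : 1 / 2 < a) :
    ∫ x : ℝ, (if x = 0 then 0 else |x| ^ (-2 * a) * Real.exp (-1 / x ^ 2)) =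
      Real.Gamma (a - 1 / 2) := by
  set f : ℝ → ℝ := fun y => y ^ (-2 * a) * exp (-y⁻¹ ^ (2 : ℝ))
  have h_even : ∀ x : ℝ,
      (if x = 0 then 0 else |x| ^ (-2 * a) * Real.exp (-1 / x ^ 2)) = f |x| := by
    intro x
    rcases eq_or_ne x 0 with rfl | hx
    -- at `x = 0` both sides vanish, since `0 ^ (-2a) = 0` for the real power
    · simp [f, zero_rpow (by linarith : -(2 * a) ≠ 0)]
    · simp [f, hx, inv_pow, neg_div]
  calc _ = ∫ x : ℝ, f |x| := by simp_rw [h_even]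
    _ = 2 * ∫ x in Ioi 0, f x := integral_comp_abs
    _ = Gamma (a - 1 / 2) := by
        rw [integral_rpow_mul_exp_neg_inv_rpow two_pos (by linarith)]
        ring_nf
end

section
/- For all real numbers a, b with a < 1/2 and a + b > 1/2, ∫_{−∞}^{∞} |x|^{−2a} (1 + x²)^{−b} dx = Γ(b + a − 1/2) · Γ(1/2 − a) / Γ(b), where Γ denotes the real Gamma function. -/
/-!
The integrand is even, so the integral is twice the integral over `(0, ∞)`. There the
substitution `t = x²` turns it into `∫₀^∞ t^(u-1) (1+t)^(-(u+v)) dt` with `u = 1/2 - a` and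
`v = b + a - 1/2`, and `t = s / (1 - s)` turns that into Euler's Beta integral
`∫₀¹ s^(u-1) (1-s)^(v-1) ds = Γ(u)Γ(v)/Γ(u+v)`.
-/

open Real MeasureTheory Set ProbabilityTheory

theorem intervalIntegral_rpow_mul_one_sub_rpow {u v : ℝ} (hu : 0 < u) (hv : 0 < v) :
    ∫ x in (0 : ℝ)..1, x ^ (u - 1) * (1 - x) ^ (v - 1) = beta u v := by
  have hcast : Complex.betaIntegral u v =
      ↑(∫ x in (0 : ℝ)..1, x ^ (u - 1) * (1 - x) ^ (v - 1)) := by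
    rw [Complex.betaIntegral, ← intervalIntegral.integral_ofReal]
    refine intervalIntegral.integral_congr fun x hx => ?_
    rw [uIcc_of_le zero_le_one] at hx
    push_cast [Complex.ofReal_cpow hx.1, Complex.ofReal_cpow (sub_nonneg.2 hx.2)]
    rfl
  rw [beta_eq_betaIntegralReal u v hu hv, hcast, Complex.ofReal_re]

theorem image_div_one_sub_Ioo : (fun s : ℝ => s / (1 - s)) '' Ioo 0 1 = Ioi 0 := by
  ext t
  simp only [mem_image, mem_Ioo, mem_Ioi]
  constructor
  · rintro ⟨s, ⟨hs0, hs1⟩, rfl⟩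
    exact div_pos hs0 (sub_pos.2 hs1)
  · intro ht
    refine ⟨t / (1 + t), ⟨by positivity, (div_lt_one (by positivity)).2 (by linarith)⟩, ?_⟩
    field_simp
    ring

theorem injOn_div_one_sub : InjOn (fun s : ℝ => s / (1 - s)) (Ioo 0 1) := by
  intro x hx y hy hxy
  have hx1 : 1 - x ≠ 0 := (sub_pos.2 hx.2).ne'
  have hy1 : 1 - y ≠ 0 := (sub_pos.2 hy.2).ne'
  field_simp at hxy
  linarith

theorem hasDerivAt_div_one_sub {s : ℝ} (hs : s < 1) :
    HasDerivAt (fun s : ℝ => s / (1 - s)) ((1 - s) ^ (-2 : ℝ)) s := by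
  have h1s : 0 < 1 - s := sub_pos.2 hs
  have h : HasDerivAt (fun s : ℝ => s / (1 - s)) ((1 * (1 - s) - s * (-1)) / (1 - s) ^ 2) s :=
    (hasDerivAt_id s).div ((hasDerivAt_id s).const_sub 1) h1s.ne'
  convert h using 1
  rw [rpow_neg h1s.le, rpow_two]
  field_simp
  ring

theorem integral_Ioi_rpow_mul_one_add_rpow {u v : ℝ} (hu : 0 < u) (hv : 0 < v) :
    ∫ t in Ioi (0 : ℝ), t ^ (u - 1) * (1 + t) ^ (-(u + v)) = beta u v := by
  have hsubst := integral_image_eq_integral_abs_deriv_smul measurableSet_Ioo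
    (fun s hs => (hasDerivAt_div_one_sub hs.2).hasDerivWithinAt) injOn_div_one_sub
    (fun t => t ^ (u - 1) * (1 + t) ^ (-(u + v)))
  rw [image_div_one_sub_Ioo] at hsubst
  rw [hsubst, ← intervalIntegral_rpow_mul_one_sub_rpow hu hv,
    intervalIntegral.integral_of_le zero_le_one, integral_Ioc_eq_integral_Ioo]
  refine setIntegral_congr_fun measurableSet_Ioo fun s ⟨hs0, hs1⟩ => ?_
  have h1s : 0 < 1 - s := sub_pos.2 hs1
  have hsum : 1 + s / (1 - s) = (1 - s)⁻¹ := by field_simp; ring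
  simp only [smul_eq_mul]
  rw [abs_of_pos (rpow_pos_of_pos h1s _), hsum, inv_rpow h1s.le, ← rpow_neg h1s.le, neg_neg,
    div_rpow hs0.le h1s.le, div_eq_mul_inv, ← rpow_neg h1s.le]
  calc (1 - s) ^ (-2 : ℝ) * (s ^ (u - 1) * (1 - s) ^ (-(u - 1)) * (1 - s) ^ (u + v))
      = s ^ (u - 1) * (1 - s) ^ (-2 + -(u - 1) + (u + v)) := by
        rw [rpow_add h1s (-2 + -(u - 1)), rpow_add h1s (-2)]; ring
    _ = s ^ (u - 1) * (1 - s) ^ (v - 1) := by ring_nf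

theorem integral_Ioi_rpow_smul_comp_sq {E : Type*} [NormedAddCommGroup E] [NormedSpace ℝ E]
    (s : ℝ) (g : ℝ → E) :
    ∫ x in Ioi (0 : ℝ), x ^ s • g (x ^ 2) =
      (2 : ℝ)⁻¹ • ∫ t in Ioi (0 : ℝ), t ^ ((s - 1) / 2) • g t := by
  rw [← integral_comp_rpow_Ioi_of_pos (g := fun t => t ^ ((s - 1) / 2) • g t) two_pos,
    ← integral_smul]
  refine setIntegral_congr_fun measurableSet_Ioi fun x (hx : 0 < x) => ?_
  rw [smul_smul, smul_smul, ← rpow_mul hx.le, rpow_two]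
  congr 1
  rw [show (2 : ℝ) - 1 = 1 by norm_num, rpow_one, show (2 : ℝ) * ((s - 1) / 2) = s - 1 by ring,
    rpow_sub_one hx.ne']
  field_simp

/-- Normalizing constant of the third dual symmetric distribution:
`∫_{−∞}^{∞} |x|^{−2a} (1+x²)^{−b} dx = Γ(b+a−1/2)Γ(1/2−a)/Γ(b)`
for `a < 1/2` and `a + b > 1/2`. -/
theorem integral_abs_rpow_one_add_sq_rpow (a b : ℝ) (ha : a < 1 / 2) (hab : 1 / 2 < a + b) :
    ∫ x : ℝ, |x| ^ (-2 * a) * (1 + x ^ 2) ^ (-b) =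
      Real.Gamma (b + a - 1 / 2) * Real.Gamma (1 / 2 - a) / Real.Gamma b := by
  have hu : 0 < 1 / 2 - a := by linarith
  have hv : 0 < b + a - 1 / 2 := by linarith
  calc ∫ x : ℝ, |x| ^ (-2 * a) * (1 + x ^ 2) ^ (-b)
      = 2 * ∫ x in Ioi (0 : ℝ), x ^ (-2 * a) * (1 + x ^ 2) ^ (-b) := by
        rw [← integral_comp_abs (f := fun x => x ^ (-2 * a) * (1 + x ^ 2) ^ (-b))]
        simp only [sq_abs]
    _ = ∫ t in Ioi (0 : ℝ), t ^ ((-2 * a - 1) / 2) * (1 + t) ^ (-b) := by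
        have h := integral_Ioi_rpow_smul_comp_sq (-2 * a) (fun t => (1 + t) ^ (-b))
        simp only [smul_eq_mul] at h
        rw [h, ← mul_assoc, mul_inv_cancel₀ two_ne_zero, one_mul]
    _ = beta (1 / 2 - a) (b + a - 1 / 2) := by
        convert integral_Ioi_rpow_mul_one_add_rpow hu hv using 5 <;> ring
    _ = Real.Gamma (b + a - 1 / 2) * Real.Gamma (1 / 2 - a) / Real.Gamma b := by
        rw [beta, mul_comm, show 1 / 2 - a + (b + a - 1 / 2) = b by ring]
end
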